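/- arXiv:2405.15759 — 7 statements merged into one kernel-verified Lean document; each statement's English description precedes it below -/
import Mathlib

section
/- Let ρ be an ℓ-multipartition of multicharge κ with defect zero, and suppose μ ⊊ ρ ⊊ λ are multipartitions of multicharge κ. Then cont(ρ/μ) ≠ cont(λ/ρ). Equivalently: if def_κ(ρ) = 0 then there do not exist multipartitions μ ⊊ ρ ⊊ λ of multicharge κ with cont(ρ∖μ) = cont(λ∖ρ). -/
/-- The residue of a node `(r, x, y)` is `(y - x) mod e`; `resCount` counts nodes of
a given residue. -/
def resCount (e ℓ : ℕ) (i : ZMod e) (S : Finset (Fin ℓ × ℤ × ℤ)) : ℕ :=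
  (S.filter (fun u => ((u.2.2 - u.2.1 : ℤ) : ZMod e) = i)).card

/-- The defect `def_κ(S) = Σ_r c_{κ̄ᵣ}(S) − (1/2)·Σ_{i∈ℤ/e}(c_i(S) − c_{i+1}(S))²`. -/
def defect (e ℓ : ℕ) [NeZero e] (κ : Fin ℓ → ℤ) (S : Finset (Fin ℓ × ℤ × ℤ)) : ℚ :=
  (∑ r : Fin ℓ, (resCount e ℓ ((κ r : ZMod e)) S : ℚ)) -
    (1 / 2) * ∑ i : ZMod e, ((resCount e ℓ i S : ℚ) - (resCount e ℓ (i + 1) S : ℚ)) ^ 2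

/-- An `ℓ`-multipartition of multicharge `κ`: in each component `r` the node set is a
Young diagram with corner node `(1, κ_r + 1)`. -/
def IsMultipartition {ℓ : ℕ} (κ : Fin ℓ → ℤ) (S : Finset (Fin ℓ × ℤ × ℤ)) : Prop :=
  (∀ r x y, (r, x, y) ∈ S → 1 ≤ x ∧ κ r + 1 ≤ y) ∧
  (∀ r x y x' y', (r, x, y) ∈ S → 1 ≤ x' → x' ≤ x → κ r + 1 ≤ y' → y' ≤ y → (r, x', y') ∈ S)

open scoped Classical


namespace S2

variable {e ℓ : ℕ}

abbrev Node (ℓ : ℕ) := Fin ℓ × ℤ × ℤ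

def res (e : ℕ) (u : Node ℓ) : ZMod e := ((u.2.2 - u.2.1 : ℤ) : ZMod e)

def down (u : Node ℓ) : Node ℓ := (u.1, u.2.1 + 1, u.2.2)
def rt (u : Node ℓ) : Node ℓ := (u.1, u.2.1, u.2.2 + 1)
def up (u : Node ℓ) : Node ℓ := (u.1, u.2.1 - 1, u.2.2)
def lf (u : Node ℓ) : Node ℓ := (u.1, u.2.1, u.2.2 - 1)

def IsMP {ℓ : ℕ} (κ : Fin ℓ → ℤ) (S : Finset (Node ℓ)) : Prop :=
  (∀ r x y, (r, x, y) ∈ S → 1 ≤ x ∧ κ r + 1 ≤ y) ∧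
  (∀ r x y x' y', (r, x, y) ∈ S → 1 ≤ x' → x' ≤ x → κ r + 1 ≤ y' → y' ≤ y → (r, x', y') ∈ S)

def Removable (S : Finset (Node ℓ)) (u : Node ℓ) : Prop :=
  u ∈ S ∧ down u ∉ S ∧ rt u ∉ S

def Addable (κ : Fin ℓ → ℤ) (S : Finset (Node ℓ)) (u : Node ℓ) : Prop :=
  u ∉ S ∧ 1 ≤ u.2.1 ∧ κ u.1 + 1 ≤ u.2.2 ∧ (u.2.1 = 1 ∨ up u ∈ S) ∧
    (u.2.2 = κ u.1 + 1 ∨ lf u ∈ S)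

@[simp] lemma res_down (u : Node ℓ) : res e (down u) = res e u - 1 := by
  simp [res, down]; ring
@[simp] lemma res_rt (u : Node ℓ) : res e (rt u) = res e u + 1 := by
  simp [res, rt]; ring
@[simp] lemma res_up (u : Node ℓ) : res e (up u) = res e u + 1 := by
  simp [res, up]; ring
@[simp] lemma res_lf (u : Node ℓ) : res e (lf u) = res e u - 1 := by
  simp [res, lf]; ring

/-- removing any set of removable nodes keeps a multipartition -/
lemma isMP_sdiff {κ : Fin ℓ → ℤ} {S X : Finset (Node ℓ)} (hS : IsMP κ S)
    (hX : ∀ u ∈ X, Removable S u) : IsMP κ (S \ X) := by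
  classical
  constructor
  · intro r x y h
    exact hS.1 r x y (Finset.mem_sdiff.1 h).1
  · intro r x y x' y' h h1 h2 h3 h4
    rcases Finset.mem_sdiff.1 h with ⟨hmem, -⟩
    have h' : (r, x', y') ∈ S := hS.2 r x y x' y' hmem h1 h2 h3 h4
    refine Finset.mem_sdiff.2 ⟨h', ?_⟩
    intro hbad
    obtain ⟨-, hd, hr⟩ := hX _ hbad
    rcases lt_or_eq_of_le h2 with hx | hx
    · exact hd (hS.2 r x y (x' + 1) y' hmem (by omega) (by omega) h3 h4)
    · rcases lt_or_eq_of_le h4 with hy | hy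
      · exact hr (hS.2 r x y x' (y' + 1) hmem h1 h2 (by omega) (by omega))
      · have heq : ((r,x',y') : Node ℓ) = (r,x,y) := by rw [hx, hy]
        rw [heq] at hbad
        exact (Finset.mem_sdiff.1 h).2 hbad

lemma isMP_erase {κ : Fin ℓ → ℤ} {S : Finset (Node ℓ)} {u : Node ℓ} (hS : IsMP κ S)
    (hu : Removable S u) : IsMP κ (S.erase u) := by
  classical
  have : S.erase u = S \ {u} := by simp [Finset.sdiff_singleton_eq_erase]
  rw [this]
  exact isMP_sdiff hS (by simpa using hu)

lemma exists_removable {S : Finset (Node ℓ)} (hne : S.Nonempty) :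
    ∃ u, Removable S u := by
  classical
  obtain ⟨u, hu, hmax⟩ := S.exists_max_image (fun u => u.2.1 + u.2.2) hne
  refine ⟨u, hu, ?_, ?_⟩
  · intro h; have := hmax _ h; simp only [down] at this; omega
  · intro h; have := hmax _ h; simp only [rt] at this; omega

lemma addable_of_removable {κ : Fin ℓ → ℤ} {S : Finset (Node ℓ)} {u : Node ℓ}
    (hS : IsMP κ S) (hu : Removable S u) : Addable κ (S.erase u) u := by
  classical
  obtain ⟨r, x, y⟩ := u
  obtain ⟨hmem, hd, hr⟩ := hu
  obtain ⟨hx, hy⟩ := hS.1 r x y hmem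
  refine ⟨by simp, hx, hy, ?_, ?_⟩
  · rcases eq_or_lt_of_le hx with h | h
    · exact Or.inl h.symm
    · refine Or.inr (Finset.mem_erase.2 ⟨?_, hS.2 r x y (x-1) y hmem (by omega) (by omega) hy le_rfl⟩)
      simp [up]
  · rcases eq_or_lt_of_le hy with h | h
    · exact Or.inl h.symm
    · refine Or.inr (Finset.mem_erase.2 ⟨?_, hS.2 r x y x (y-1) hmem hx le_rfl (by omega) (by omega)⟩)
      simp [lf]

/-! ### coordinate helper lemmas -/

lemma down_eq_iff {v n : Node ℓ} : down v = n ↔ v = up n := by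
  obtain ⟨a,b,c⟩ := v; obtain ⟨r,x,y⟩ := n
  simp only [down, up, Prod.mk.injEq]
  constructor <;> rintro ⟨h1,h2,h3⟩ <;> refine ⟨h1, by omega, h3⟩

lemma rt_eq_iff {v n : Node ℓ} : rt v = n ↔ v = lf n := by
  obtain ⟨a,b,c⟩ := v; obtain ⟨r,x,y⟩ := n
  simp only [rt, lf, Prod.mk.injEq]
  constructor <;> rintro ⟨h1,h2,h3⟩ <;> refine ⟨h1, h2, by omega⟩

lemma ne_up (n : Node ℓ) : n ≠ up n := by
  obtain ⟨r,x,y⟩ := n; simp only [up, Prod.mk.injEq, ne_eq]; intro h; omega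

lemma ne_lf (n : Node ℓ) : n ≠ lf n := by
  obtain ⟨r,x,y⟩ := n; simp only [lf, Prod.mk.injEq, ne_eq]; intro h; omega

lemma lf_ne_up (n : Node ℓ) : lf n ≠ up n := by
  obtain ⟨r,x,y⟩ := n; simp only [lf, up, Prod.mk.injEq, ne_eq]; intro h; omega

lemma down_ne_self (n : Node ℓ) : down n ≠ n := by
  obtain ⟨r,x,y⟩ := n; simp only [down, Prod.mk.injEq, ne_eq]; intro h; omega

lemma rt_ne_self (n : Node ℓ) : rt n ≠ n := by
  obtain ⟨r,x,y⟩ := n; simp only [rt, Prod.mk.injEq, ne_eq]; intro h; omega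

lemma down_ne_rt (n : Node ℓ) : down n ≠ rt n := by
  obtain ⟨r,x,y⟩ := n; simp only [down, rt, Prod.mk.injEq, ne_eq]; intro h; omega

lemma down_up (n : Node ℓ) : down (up n) = n := by
  obtain ⟨r,x,y⟩ := n; simp only [down, up]; refine Prod.ext rfl (Prod.ext ?_ rfl); simp

lemma rt_lf (n : Node ℓ) : rt (lf n) = n := by
  obtain ⟨r,x,y⟩ := n; simp only [rt, lf]; refine Prod.ext rfl (Prod.ext rfl ?_); simp

lemma up_down (n : Node ℓ) : up (down n) = n := by
  obtain ⟨r,x,y⟩ := n; simp only [down, up]; refine Prod.ext rfl (Prod.ext ?_ rfl); simp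

lemma lf_rt (n : Node ℓ) : lf (rt n) = n := by
  obtain ⟨r,x,y⟩ := n; simp only [rt, lf]; refine Prod.ext rfl (Prod.ext rfl ?_); simp

lemma rt_up (n : Node ℓ) : rt (up n) = up (rt n) := rfl

lemma down_lf (n : Node ℓ) : down (lf n) = lf (down n) := rfl

/-! ### counting sets -/

variable [NeZero e]

noncomputable def Rem (e : ℕ) (i : ZMod e) (S : Finset (Node ℓ)) : Finset (Node ℓ) :=
  S.filter (fun u => Removable S u ∧ res e u = i)

def cand (κ : Fin ℓ → ℤ) (S : Finset (Node ℓ)) : Finset (Node ℓ) :=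
  (Finset.univ.image fun r => (r, 1, κ r + 1)) ∪ S.image down ∪ S.image rt

noncomputable def Adl (e : ℕ) (κ : Fin ℓ → ℤ) (i : ZMod e) (S : Finset (Node ℓ)) : Finset (Node ℓ) :=
  (cand κ S).filter (fun u => Addable κ S u ∧ res e u = i)

def mch (e : ℕ) {ℓ : ℕ} (κ : Fin ℓ → ℤ) (i : ZMod e) : ℕ :=
  (Finset.univ.filter fun r : Fin ℓ => ((κ r : ZMod e) = i)).card

lemma mem_Rem {S : Finset (Node ℓ)} {i : ZMod e} {v : Node ℓ} :
    v ∈ Rem e i S ↔ Removable S v ∧ res e v = i := by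
  simp only [Rem, Finset.mem_filter]
  refine ⟨fun h => h.2, fun h => ⟨h.1.1, h⟩⟩

lemma mem_Adl {κ : Fin ℓ → ℤ} {S : Finset (Node ℓ)} {i : ZMod e} {v : Node ℓ} :
    v ∈ Adl e κ i S ↔ Addable κ S v ∧ res e v = i := by
  simp only [Adl, Finset.mem_filter, and_iff_right_iff_imp]
  rintro ⟨⟨hnm, hx, hy, hu, hl⟩, -⟩
  simp only [cand, Finset.mem_union, Finset.mem_image, Finset.mem_univ, true_and]
  rcases hu with hu | hu
  · rcases hl with hl | hl
    · left; left
      exact ⟨v.1, Prod.ext rfl (Prod.ext hu.symm hl.symm)⟩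
    · right
      exact ⟨lf v, hl, rt_lf v⟩
  · left; right
    exact ⟨up v, hu, down_up v⟩

lemma resCount_eq_card_filter (i : ZMod e) (S : Finset (Node ℓ)) :
    resCount e ℓ i S = (S.filter (fun u => res e u = i)).card := by
  simp [resCount, res]

lemma resCount_insert {S : Finset (Node ℓ)} {n : Node ℓ} (hn : n ∉ S) (i : ZMod e) :
    (resCount e ℓ i (insert n S) : ℤ)
      = resCount e ℓ i S + (if res e n = i then 1 else 0) := by
  classical
  rw [resCount_eq_card_filter, resCount_eq_card_filter, Finset.filter_insert]
  split_ifs with h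
  · rw [Finset.card_insert_of_notMem (fun hc => hn (Finset.mem_filter.1 hc).1)]
    push_cast; ring
  · simp

lemma up_eq_iff {v n : Node ℓ} : up v = n ↔ v = down n := by
  obtain ⟨a,b,c⟩ := v; obtain ⟨r,x,y⟩ := n
  simp only [down, up, Prod.mk.injEq]
  constructor <;> rintro ⟨h1,h2,h3⟩ <;> refine ⟨h1, by omega, h3⟩

lemma lf_eq_iff {v n : Node ℓ} : lf v = n ↔ v = rt n := by
  obtain ⟨a,b,c⟩ := v; obtain ⟨r,x,y⟩ := n
  simp only [rt, lf, Prod.mk.injEq]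
  constructor <;> rintro ⟨h1,h2,h3⟩ <;> refine ⟨h1, h2, by omega⟩

variable {κ : Fin ℓ → ℤ} {S : Finset (Node ℓ)} {n v : Node ℓ}

lemma down_not_mem (hS : IsMP κ S) (hn : Addable κ S n) : down n ∉ S := by
  intro h
  obtain ⟨r,x,y⟩ := n
  exact hn.1 (hS.2 r (x+1) y x y h hn.2.1 (by omega) hn.2.2.1 le_rfl)

lemma rt_not_mem (hS : IsMP κ S) (hn : Addable κ S n) : rt n ∉ S := by
  intro h
  obtain ⟨r,x,y⟩ := n
  exact hn.1 (hS.2 r x (y+1) x y h hn.2.1 le_rfl hn.2.2.1 (by omega))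

lemma removable_insert_iff (hv1 : v ≠ n) (hv2 : v ≠ up n) (hv3 : v ≠ lf n) :
    Removable (insert n S) v ↔ Removable S v := by
  have h2 : down v ≠ n := fun h => hv2 (down_eq_iff.1 h)
  have h3 : rt v ≠ n := fun h => hv3 (rt_eq_iff.1 h)
  simp [Removable, Finset.mem_insert, hv1, h2, h3]

lemma Rem_insert (hS : IsMP κ S) (hn : Addable κ S n) (i : ZMod e) :
    Rem e i (insert n S) =
      ((if res e n = i then insert n (Rem e i S) else Rem e i S).erase (up n)).erase (lf n) := by
  have hdn : down n ∉ insert n S := by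
    rw [Finset.mem_insert]
    rintro (h | h)
    · exact down_ne_self n h
    · exact down_not_mem hS hn h
  have hrn : rt n ∉ insert n S := by
    rw [Finset.mem_insert]
    rintro (h | h)
    · exact rt_ne_self n h
    · exact rt_not_mem hS hn h
  ext v
  rw [Finset.mem_erase, Finset.mem_erase, mem_Rem]
  by_cases hv1 : v = n
  · subst hv1
    have hrem : Removable (insert v S) v := ⟨Finset.mem_insert_self _ _, hdn, hrn⟩
    simp only [hrem, true_and]
    constructor
    · intro h
      refine ⟨ne_lf v, ne_up v, ?_⟩
      rw [if_pos h]
      exact Finset.mem_insert_self _ _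
    · rintro ⟨-, -, h⟩
      by_contra hne
      rw [if_neg hne] at h
      exact hn.1 (mem_Rem.1 h).1.1
  · by_cases hv2 : v = up n
    · subst hv2
      constructor
      · rintro ⟨⟨-, hd, -⟩, -⟩
        rw [down_up n] at hd
        exact absurd (Finset.mem_insert_self n S) hd
      · rintro ⟨-, h, -⟩
        exact absurd rfl h
    · by_cases hv3 : v = lf n
      · subst hv3
        constructor
        · rintro ⟨⟨-, -, hr⟩, -⟩
          rw [rt_lf n] at hr
          exact absurd (Finset.mem_insert_self n S) hr
        · rintro ⟨h, -, -⟩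
          exact absurd rfl h
      · rw [removable_insert_iff hv1 hv2 hv3]
        have hmem : v ∈ (if res e n = i then insert n (Rem e i S) else Rem e i S)
            ↔ v ∈ Rem e i S := by
          split_ifs
          · simp [Finset.mem_insert, hv1]
          · exact Iff.rfl
        rw [hmem, mem_Rem]
        simp [hv2, hv3]

lemma card_erase_int (X : Finset (Node ℓ)) (a : Node ℓ) :
    (((X.erase a).card : ℤ)) = X.card - (if a ∈ X then 1 else 0) := by
  by_cases h : a ∈ X
  · rw [if_pos h, Finset.card_erase_of_mem h]
    have : 1 ≤ X.card := Finset.card_pos.2 ⟨a, h⟩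
    omega
  · rw [if_neg h, Finset.erase_eq_of_notMem h]
    simp

lemma Rem_card_insert (hS : IsMP κ S) (hn : Addable κ S n) (i : ZMod e) :
    ((Rem e i (insert n S)).card : ℤ) =
      (Rem e i S).card + (if res e n = i then 1 else 0)
        - (if up n ∈ Rem e i S then 1 else 0) - (if lf n ∈ Rem e i S then 1 else 0) := by
  have hnotin : n ∉ Rem e i S := fun h => hn.1 (mem_Rem.1 h).1.1
  have hc : (((if res e n = i then insert n (Rem e i S) else Rem e i S)).card : ℤ)
      = (Rem e i S).card + (if res e n = i then 1 else 0) := by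
    split_ifs
    · rw [Finset.card_insert_of_notMem hnotin]; push_cast; ring
    · simp
  have hup : up n ∈ (if res e n = i then insert n (Rem e i S) else Rem e i S)
      ↔ up n ∈ Rem e i S := by
    split_ifs
    · simp [Finset.mem_insert, Ne.symm (ne_up n)]
    · exact Iff.rfl
  have hlf : lf n ∈ ((if res e n = i then insert n (Rem e i S) else Rem e i S)).erase (up n)
      ↔ lf n ∈ Rem e i S := by
    rw [Finset.mem_erase]
    simp only [lf_ne_up n, true_and, ne_eq, not_false_iff]
    split_ifs
    · simp [Finset.mem_insert, Ne.symm (ne_lf n)]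
    · exact Iff.rfl
  rw [Rem_insert hS hn i, card_erase_int, card_erase_int, hc]
  simp only [hup, hlf]
  try ring

lemma not_addable_down (hn : Addable κ S n) : ¬ Addable κ S (down n) := by
  rintro ⟨-, -, -, h4, -⟩
  rcases h4 with h | h
  · have := hn.2.1
    simp only [down] at h
    omega
  · rw [up_down n] at h
    exact hn.1 h

lemma not_addable_rt (hn : Addable κ S n) : ¬ Addable κ S (rt n) := by
  rintro ⟨-, -, -, -, h5⟩
  rcases h5 with h | h
  · have := hn.2.2.1
    simp only [rt] at h
    omega
  · rw [lf_rt n] at h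
    exact hn.1 h

lemma addable_insert_iff (hv1 : v ≠ n) (hv2 : v ≠ down n) (hv3 : v ≠ rt n) :
    Addable κ (insert n S) v ↔ Addable κ S v := by
  have h2 : up v ≠ n := fun h => hv2 (up_eq_iff.1 h)
  have h3 : lf v ≠ n := fun h => hv3 (lf_eq_iff.1 h)
  simp [Addable, Finset.mem_insert, hv1, h2, h3]

lemma Adl_insert (hS : IsMP κ S) (hn : Addable κ S n) (i : ZMod e) :
    Adl e κ i (insert n S) =
      ((if res e n = i then (Adl e κ i S).erase n else Adl e κ i S)
        ∪ (if Addable κ (insert n S) (down n) ∧ res e (down n) = i then {down n} else ∅))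
        ∪ (if Addable κ (insert n S) (rt n) ∧ res e (rt n) = i then {rt n} else ∅) := by
  ext v
  rw [mem_Adl, Finset.mem_union, Finset.mem_union]
  by_cases hv1 : v = n
  · subst hv1
    have hna : ¬ Addable κ (insert v S) v := fun h => h.1 (Finset.mem_insert_self _ _)
    simp only [hna, false_and, false_iff]
    push_neg
    refine ⟨⟨?_, ?_⟩, ?_⟩
    · split_ifs with h
      · simp
      · intro hc
        exact h (mem_Adl.1 hc).2
    · split_ifs with h
      · simp [Ne.symm (down_ne_self v)]
      · simp
    · split_ifs with h
      · simp [Ne.symm (rt_ne_self v)]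
      · simp
  · by_cases hv2 : v = down n
    · subst hv2
      have hnd : down n ∉ Adl e κ i S := fun h => not_addable_down hn (mem_Adl.1 h).1
      have hfirst : ¬ (down n ∈ (if res e n = i then (Adl e κ i S).erase n else Adl e κ i S)) := by
        split_ifs
        · exact fun h => hnd (Finset.mem_erase.1 h).2
        · exact hnd
      constructor
      · intro h
        left; right
        rw [if_pos h]
        exact Finset.mem_singleton_self _
      · rintro ((h | h) | h)
        · exact absurd h hfirst
        · by_contra hc
          rw [if_neg hc] at h
          exact Finset.notMem_empty _ h
        · exfalso
          rcases em (Addable κ (insert n S) (rt n) ∧ res e (rt n) = i) with hP | hP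
          · rw [if_pos hP] at h
            exact down_ne_rt n (Finset.mem_singleton.1 h)
          · rw [if_neg hP] at h
            exact Finset.notMem_empty _ h
    · by_cases hv3 : v = rt n
      · subst hv3
        have hnd : rt n ∉ Adl e κ i S := fun h => not_addable_rt hn (mem_Adl.1 h).1
        have hfirst : ¬ (rt n ∈ (if res e n = i then (Adl e κ i S).erase n else Adl e κ i S)) := by
          split_ifs
          · exact fun h => hnd (Finset.mem_erase.1 h).2
          · exact hnd
        constructor
        · intro h
          right
          rw [if_pos h]
          exact Finset.mem_singleton_self _
        · rintro ((h | h) | h)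
          · exact absurd h hfirst
          · exfalso
            rcases em (Addable κ (insert n S) (down n) ∧ res e (down n) = i) with hP | hP
            · rw [if_pos hP] at h
              exact down_ne_rt n (Finset.mem_singleton.1 h).symm
            · rw [if_neg hP] at h
              exact Finset.notMem_empty _ h
          · by_contra hc
            rw [if_neg hc] at h
            exact Finset.notMem_empty _ h
      · rw [addable_insert_iff hv1 hv2 hv3]
        have hfirst : v ∈ (if res e n = i then (Adl e κ i S).erase n else Adl e κ i S)
            ↔ v ∈ Adl e κ i S := by
          split_ifs
          · rw [Finset.mem_erase]
            simp [hv1]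
          · exact Iff.rfl
        constructor
        · intro h
          exact Or.inl (Or.inl (hfirst.2 (mem_Adl.2 h)))
        · rintro ((h | h) | h)
          · exact (mem_Adl.1 (hfirst.1 h))
          · split_ifs at h
            · exact absurd (Finset.mem_singleton.1 h) hv2
            · exact absurd h (Finset.notMem_empty _)
          · split_ifs at h
            · exact absurd (Finset.mem_singleton.1 h) hv3
            · exact absurd h (Finset.notMem_empty _)

lemma Adl_card_insert (hS : IsMP κ S) (hn : Addable κ S n) (i : ZMod e) :
    ((Adl e κ i (insert n S)).card : ℤ) =
      (Adl e κ i S).card - (if res e n = i then 1 else 0)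
        + (if Addable κ (insert n S) (down n) ∧ res e (down n) = i then 1 else 0)
        + (if Addable κ (insert n S) (rt n) ∧ res e (rt n) = i then 1 else 0) := by
  rw [Adl_insert hS hn i]
  have hnd : down n ∉ Adl e κ i S := fun h => not_addable_down hn (mem_Adl.1 h).1
  have hnr : rt n ∉ Adl e κ i S := fun h => not_addable_rt hn (mem_Adl.1 h).1
  have d1 : Disjoint (if res e n = i then (Adl e κ i S).erase n else Adl e κ i S)
      (if Addable κ (insert n S) (down n) ∧ res e (down n) = i then ({down n} : Finset (Node ℓ)) else ∅) := by
    rw [Finset.disjoint_right]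
    intro a ha
    split_ifs at ha with h
    · rw [Finset.mem_singleton] at ha
      subst ha
      split_ifs with h2
      · exact fun hc => hnd (Finset.mem_erase.1 hc).2
      · exact hnd
    · exact absurd ha (Finset.notMem_empty _)
  have d2 : Disjoint ((if res e n = i then (Adl e κ i S).erase n else Adl e κ i S)
        ∪ (if Addable κ (insert n S) (down n) ∧ res e (down n) = i then ({down n} : Finset (Node ℓ)) else ∅))
      (if Addable κ (insert n S) (rt n) ∧ res e (rt n) = i then ({rt n} : Finset (Node ℓ)) else ∅) := by
    rw [Finset.disjoint_right]
    intro a ha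
    split_ifs at ha with h
    · rw [Finset.mem_singleton] at ha
      subst ha
      rw [Finset.mem_union]
      push_neg
      constructor
      · split_ifs with h2
        · exact fun hc => hnr (Finset.mem_erase.1 hc).2
        · exact hnr
      · split_ifs with h2
        · simp [Ne.symm (down_ne_rt n)]
        · simp
    · exact absurd ha (Finset.notMem_empty _)
  rw [Finset.card_union_of_disjoint d2, Finset.card_union_of_disjoint d1]
  have hmem : n ∈ Adl e κ i S ↔ res e n = i := by
    rw [mem_Adl]
    exact ⟨fun h => h.2, fun h => ⟨hn, h⟩⟩
  simp only [apply_ite Finset.card, Finset.card_singleton, Finset.card_empty]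
  push_cast
  rcases em (res e n = i) with h | h
  · rw [if_pos h, if_pos h, Finset.card_erase_of_mem (hmem.2 h)]
    have h1 : 1 ≤ (Adl e κ i S).card := Finset.card_pos.2 ⟨n, hmem.2 h⟩
    rw [Nat.cast_sub h1]
    push_cast
    ring
  · rw [if_neg h, if_neg h]
    ring

lemma addable_rt_iff (hS : IsMP κ S) (hn : Addable κ S n) :
    Addable κ (insert n S) (rt n) ↔ (n.2.1 = 1 ∨ up (rt n) ∈ S) := by
  have hnm : rt n ∉ insert n S := by
    rw [Finset.mem_insert]
    rintro (h | h)
    · exact rt_ne_self n h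
    · exact rt_not_mem hS hn h
  have hne : up (rt n) ≠ n := fun h => down_ne_rt n (up_eq_iff.1 h).symm
  constructor
  · rintro ⟨-, -, -, h4, -⟩
    rcases h4 with h | h
    · exact Or.inl h
    · rw [Finset.mem_insert] at h
      exact Or.inr (h.resolve_left hne)
  · intro h
    refine ⟨hnm, hn.2.1, ?_, ?_, Or.inr ?_⟩
    · have := hn.2.2.1
      simp only [rt]
      omega
    · rcases h with h | h
      · exact Or.inl h
      · exact Or.inr (Finset.mem_insert_of_mem h)
    · rw [lf_rt]
      exact Finset.mem_insert_self _ _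

lemma addable_down_iff (hS : IsMP κ S) (hn : Addable κ S n) :
    Addable κ (insert n S) (down n) ↔ (n.2.2 = κ n.1 + 1 ∨ lf (down n) ∈ S) := by
  have hnm : down n ∉ insert n S := by
    rw [Finset.mem_insert]
    rintro (h | h)
    · exact down_ne_self n h
    · exact down_not_mem hS hn h
  have hne : lf (down n) ≠ n := fun h => down_ne_rt n (lf_eq_iff.1 h).symm.symm
  constructor
  · rintro ⟨-, -, -, -, h5⟩
    rcases h5 with h | h
    · exact Or.inl h
    · rw [Finset.mem_insert] at h
      refine Or.inr (h.resolve_left ?_)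
      intro hc
      exact down_ne_rt n ((lf_eq_iff.1 hc) ▸ rfl)
  · intro h
    refine ⟨hnm, ?_, ?_, Or.inr ?_, ?_⟩
    · have := hn.2.1
      simp only [down]
      omega
    · exact hn.2.2.1
    · rw [up_down]
      exact Finset.mem_insert_self _ _
    · rcases h with h | h
      · exact Or.inl h
      · exact Or.inr (Finset.mem_insert_of_mem h)

lemma rt_compl (hS : IsMP κ S) (hn : Addable κ S n) :
    Addable κ (insert n S) (rt n) ↔ ¬ Removable S (up n) := by
  rw [addable_rt_iff hS hn]
  constructor
  · rintro (h | h) ⟨h1, h2, h3⟩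
    · obtain ⟨r, x, y⟩ := n
      simp only at h
      subst h
      have := (hS.1 _ _ _ h1).1
      simp only [up] at this
      omega
    · exact h3 (by rw [rt_up]; exact h)
  · intro h
    by_cases hx : n.2.1 = 1
    · exact Or.inl hx
    · have hup : up n ∈ S := hn.2.2.2.1.resolve_left hx
      by_contra hc
      push_neg at hc
      exact h ⟨hup, by rw [down_up]; exact hn.1, by rw [rt_up]; exact hc.2⟩

lemma down_compl (hS : IsMP κ S) (hn : Addable κ S n) :
    Addable κ (insert n S) (down n) ↔ ¬ Removable S (lf n) := by
  rw [addable_down_iff hS hn]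
  constructor
  · rintro (h | h) ⟨h1, h2, h3⟩
    · obtain ⟨r, x, y⟩ := n
      simp only at h
      subst h
      have := (hS.1 _ _ _ h1).2
      simp only [lf] at this
      omega
    · exact h2 (by rw [down_lf]; exact h)
  · intro h
    by_cases hy : n.2.2 = κ n.1 + 1
    · exact Or.inl hy
    · have hlf : lf n ∈ S := hn.2.2.2.2.resolve_left hy
      by_contra hc
      push_neg at hc
      exact h ⟨hlf, by rw [down_lf]; exact hc.2, by rw [rt_lf]; exact hn.1⟩

lemma Adl_empty_card (κ : Fin ℓ → ℤ) (i : ZMod e) :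
    (Adl e κ i (∅ : Finset (Node ℓ))).card = mch e κ i := by
  have heq : Adl e κ i (∅ : Finset (Node ℓ)) =
      (Finset.univ.filter (fun r : Fin ℓ => ((κ r : ZMod e) = i))).image
        (fun r => (r, 1, κ r + 1)) := by
    ext v
    rw [mem_Adl]
    simp only [Finset.mem_image, Finset.mem_filter, Finset.mem_univ, true_and]
    constructor
    · rintro ⟨⟨-, hx, hy, h4, h5⟩, hres⟩
      have hx1 : v.2.1 = 1 := by
        rcases h4 with h | h
        · exact h
        · exact absurd h (Finset.notMem_empty _)
      have hy1 : v.2.2 = κ v.1 + 1 := by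
        rcases h5 with h | h
        · exact h
        · exact absurd h (Finset.notMem_empty _)
      refine ⟨v.1, ?_, Prod.ext rfl (Prod.ext hx1.symm hy1.symm)⟩
      rw [← hres]
      simp [res, hx1, hy1]
    · rintro ⟨r, hr, rfl⟩
      refine ⟨⟨Finset.notMem_empty _, le_rfl, le_rfl, Or.inl rfl, Or.inl rfl⟩, ?_⟩
      simp only [res]
      rw [show ((κ r + 1 - 1 : ℤ)) = κ r by ring]
      exact hr
  rw [heq, Finset.card_image_of_injective _ (fun a b h => congrArg Prod.fst h), mch]

theorem AR (S : Finset (Node ℓ)) : ∀ {κ : Fin ℓ → ℤ}, IsMP κ S → ∀ i : ZMod e,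
    ((Adl e κ i S).card : ℤ) + 2 * (resCount e ℓ i S : ℤ)
      = ((Rem e i S).card : ℤ) + (mch e κ i : ℤ)
        + (resCount e ℓ (i+1) S : ℤ) + (resCount e ℓ (i-1) S : ℤ) := by
  induction S using Finset.strongInduction with
  | _ S IH =>
    intro κ hS i
    rcases S.eq_empty_or_nonempty with rfl | hne
    · have h1 : Rem e i (∅ : Finset (Node ℓ)) = ∅ := by simp [Rem]
      simp [Adl_empty_card, h1, resCount]
    · obtain ⟨n, hrem⟩ := exists_removable hne
      have hS' : IsMP κ (S.erase n) := isMP_erase hS hrem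
      have hadd : Addable κ (S.erase n) n := addable_of_removable hS hrem
      have hins : insert n (S.erase n) = S := Finset.insert_erase hrem.1
      have hIH := IH (S.erase n) (Finset.erase_ssubset hrem.1) hS' i
      have hnotmem : n ∉ S.erase n := Finset.notMem_erase n S
      have hrt' : Removable (S.erase n) (up n) ↔
          ¬ Addable κ (insert n (S.erase n)) (rt n) :=
        iff_not_comm.1 (rt_compl hS' hadd)
      have hdw' : Removable (S.erase n) (lf n) ↔
          ¬ Addable κ (insert n (S.erase n)) (down n) :=
        iff_not_comm.1 (down_compl hS' hadd)
      rw [← hins]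
      rw [Adl_card_insert hS' hadd i, Rem_card_insert hS' hadd i,
          resCount_insert hnotmem i, resCount_insert hnotmem (i+1),
          resCount_insert hnotmem (i-1)]
      simp only [mem_Rem, res_rt, res_down, res_up, res_lf]
      have e1 : (res e n = i + 1) = (res e n - 1 = i) :=
        propext ⟨fun h => by rw [h]; ring, fun h => by rw [← h]; ring⟩
      have e2 : (res e n = i - 1) = (res e n + 1 = i) :=
        propext ⟨fun h => by rw [h]; ring, fun h => by rw [← h]; ring⟩
      simp only [e1, e2]
      by_cases h1 : res e n = i <;> by_cases h2 : res e n + 1 = i <;>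
        by_cases h3 : res e n - 1 = i <;>
        by_cases hA : Addable κ (insert n (S.erase n)) (down n) <;>
        by_cases hB : Addable κ (insert n (S.erase n)) (rt n) <;>
        simp only [h1, h2, h3, hA, hB, hrt', hdw', not_true, not_false_iff,
          and_true, and_false, true_and, false_and, if_true, if_false,
          ite_true, ite_false, not_false_eq_true, not_true_eq_false] <;>
        linarith [hIH]

lemma resCount_sdiff_add {X S : Finset (Node ℓ)} (h : X ⊆ S) (i : ZMod e) :
    resCount e ℓ i X + resCount e ℓ i (S \ X) = resCount e ℓ i S := by
  classical
  rw [resCount_eq_card_filter, resCount_eq_card_filter, resCount_eq_card_filter]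
  rw [← Finset.card_union_of_disjoint
    (Finset.disjoint_filter_filter Finset.disjoint_sdiff)]
  congr 1
  rw [← Finset.filter_union, Finset.union_sdiff_of_subset h]

lemma resCount_Rem (p i : ZMod e) (S : Finset (Node ℓ)) :
    resCount e ℓ p (Rem e i S) = if p = i then (Rem e i S).card else 0 := by
  rw [resCount_eq_card_filter]
  split_ifs with h
  · subst h
    rw [Finset.filter_true_of_mem (fun u hu => (mem_Rem.1 hu).2)]
  · rw [Finset.filter_false_of_mem (fun u hu hc => h (by rw [← hc, (mem_Rem.1 hu).2]))]
    simp

theorem defect_nonneg (he : 1 < e) (S : Finset (Node ℓ)) :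
    ∀ {κ : Fin ℓ → ℤ}, IsMP κ S → 0 ≤ defect e ℓ κ S := by
  have hone : (1 : ZMod e) ≠ 0 := by
    haveI : Fact (1 < e) := ⟨he⟩
    exact one_ne_zero
  induction S using Finset.strongInduction with
  | _ S IH =>
    intro κ hS
    rcases S.eq_empty_or_nonempty with rfl | hne
    · unfold defect
      simp [resCount]
    · obtain ⟨n, hrem⟩ := exists_removable hne
      have hnR : n ∈ Rem e (res e n) S := mem_Rem.2 ⟨hrem, rfl⟩
      set i : ZMod e := res e n with hi
      have hRsub : Rem e i S ⊆ S := Finset.filter_subset _ _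
      have hRne : (Rem e i S).Nonempty := ⟨n, hnR⟩
      have hTS : S \ Rem e i S ⊂ S := Finset.sdiff_ssubset hRsub hRne
      have hTmp : IsMP κ (S \ Rem e i S) := isMP_sdiff hS (fun u hu => (mem_Rem.1 hu).1)
      have hT0 : 0 ≤ defect e ℓ κ (S \ Rem e i S) := IH _ hTS hTmp
      have hcT : ∀ p : ZMod e, (resCount e ℓ p (S \ Rem e i S) : ℚ)
          = (resCount e ℓ p S : ℚ) - (if p = i then ((Rem e i S).card : ℚ) else 0) := by
        intro p
        have hadd := resCount_sdiff_add hRsub p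
        rw [resCount_Rem p i S] at hadd
        have hc := congrArg (fun m : ℕ => (m : ℚ)) hadd
        push_cast at hc
        split_ifs at hc ⊢ with h
        · linarith [hc]
        · linarith [hc]
      have hAR := AR S hS i
      have hARQ : (mch e κ i : ℚ) + resCount e ℓ (i+1) S + resCount e ℓ (i-1) S
          + (Rem e i S).card - 2 * resCount e ℓ i S = ((Adl e κ i S).card : ℚ) := by
        have hc := congrArg (fun z : ℤ => (z : ℚ)) hAR
        push_cast at hc
        linarith [hc]
      -- the two sums
      have hlin : ∑ r : Fin ℓ, (resCount e ℓ ((κ r : ZMod e)) (S \ Rem e i S) : ℚ)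
          = (∑ r : Fin ℓ, (resCount e ℓ ((κ r : ZMod e)) S : ℚ))
            - ((Rem e i S).card : ℚ) * (mch e κ i : ℚ) := by
        rw [Finset.sum_congr rfl (fun r _ => hcT ((κ r : ZMod e))), Finset.sum_sub_distrib]
        congr 1
        rw [Finset.sum_ite, Finset.sum_const, Finset.sum_const_zero, add_zero, mch]
        push_cast
        rw [nsmul_eq_mul]
        ring
      have hii : i ≠ i - 1 := by
        intro h
        apply hone
        rw [show (1 : ZMod e) = i - (i - 1) by ring, ← h]
        simp
      have hkey : ∑ p : ZMod e,
            (((resCount e ℓ p S : ℚ) - (resCount e ℓ (p+1) S : ℚ))^2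
              - ((resCount e ℓ p (S \ Rem e i S) : ℚ) - (resCount e ℓ (p+1) (S \ Rem e i S) : ℚ))^2)
          = 2 * ((Rem e i S).card : ℚ) * (2 * resCount e ℓ i S - resCount e ℓ (i+1) S
              - resCount e ℓ (i-1) S - (Rem e i S).card) := by
        rw [← Finset.sum_subset (Finset.subset_univ {i, i-1}) ?hvan]
        case hvan =>
          intro p _ hp
          simp only [Finset.mem_insert, Finset.mem_singleton] at hp
          push_neg at hp
          have hp2 : p + 1 ≠ i := fun h => hp.2 (by rw [← h]; ring)
          rw [hcT p, hcT (p+1), if_neg hp.1, if_neg hp2]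
          ring
        rw [Finset.sum_pair hii]
        have hsim : i - 1 + 1 = i := by ring
        rw [hsim, hcT i, hcT (i+1), hcT (i-1)]
        have hc1 : i + 1 ≠ i := fun h => hone (by
          rw [show (1 : ZMod e) = i + 1 - i by ring, h]; simp)
        have hc2 : i - 1 ≠ i := fun h => hii h.symm
        rw [if_pos rfl, if_neg hc1, if_neg hc2]
        ring
      have hquad : ∑ p : ZMod e,
            ((resCount e ℓ p (S \ Rem e i S) : ℚ) - (resCount e ℓ (p+1) (S \ Rem e i S) : ℚ))^2
          = (∑ p : ZMod e, ((resCount e ℓ p S : ℚ) - (resCount e ℓ (p+1) S : ℚ))^2)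
            - 2 * ((Rem e i S).card : ℚ) * (2 * resCount e ℓ i S - resCount e ℓ (i+1) S
              - resCount e ℓ (i-1) S - (Rem e i S).card) := by
        rw [Finset.sum_sub_distrib] at hkey
        linarith [hkey]
      have hdiff : defect e ℓ κ S = defect e ℓ κ (S \ Rem e i S)
          + ((Rem e i S).card : ℚ) * ((mch e κ i : ℚ) + resCount e ℓ (i+1) S
            + resCount e ℓ (i-1) S + (Rem e i S).card - 2 * resCount e ℓ i S) := by
        unfold defect
        rw [hlin, hquad]
        ring
      rw [hdiff, hARQ]
      have hpos : (0:ℚ) ≤ ((Rem e i S).card : ℚ) * ((Adl e κ i S).card : ℚ) := by positivity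
      linarith

lemma sum_resCount (X : Finset (Node ℓ)) :
    ∑ p : ZMod e, resCount e ℓ p X = X.card := by
  classical
  rw [Finset.sum_congr rfl (fun p _ => resCount_eq_card_filter p X)]
  exact (Finset.card_eq_sum_card_fiberwise
    (f := res e) (t := Finset.univ) (fun x _ => Finset.mem_univ (res e x))).symm

end S2

/-- If `ρ` is a multipartition of multicharge `κ` with defect zero, then there do not
exist multipartitions `μ ⊊ ρ ⊊ λ` of multicharge `κ` with `cont(ρ∖μ) = cont(λ∖ρ)`. -/
theorem statement2 (e ℓ : ℕ) [NeZero e] (he : 1 < e) (κ : Fin ℓ → ℤ)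
    (ρ : Finset (Fin ℓ × ℤ × ℤ)) (hρ : IsMultipartition κ ρ)
    (hdef : defect e ℓ κ ρ = 0) :
    ¬ ∃ μ lam : Finset (Fin ℓ × ℤ × ℤ),
        IsMultipartition κ μ ∧ IsMultipartition κ lam ∧ μ ⊂ ρ ∧ ρ ⊂ lam ∧
        ∀ i : ZMod e, resCount e ℓ i (ρ \ μ) = resCount e ℓ i (lam \ ρ) := by
  classical
  rintro ⟨μ, lam, hμ, hlam, hμρ, hrl, hcont⟩
  have hμmp : S2.IsMP κ μ := hμ
  have hρmp : S2.IsMP κ ρ := hρ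
  have hlmp : S2.IsMP κ lam := hlam
  have hμ0 : 0 ≤ defect e ℓ κ μ := S2.defect_nonneg he μ hμmp
  have hl0 : 0 ≤ defect e ℓ κ lam := S2.defect_nonneg he lam hlmp
  set d : ZMod e → ℚ := fun p => (resCount e ℓ p (ρ \ μ) : ℚ) with hd
  have hsubμ : μ ⊆ ρ := hμρ.subset
  have hcρ : ∀ p : ZMod e, (resCount e ℓ p ρ : ℚ) = resCount e ℓ p μ + d p := by
    intro p
    have h1 := S2.resCount_sdiff_add hsubμ p
    rw [← h1, hd]
    push_cast
    ring
  have hcl : ∀ p : ZMod e, (resCount e ℓ p lam : ℚ) = resCount e ℓ p μ + 2 * d p := by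
    intro p
    have h2 := S2.resCount_sdiff_add hrl.subset p
    rw [← hcont p] at h2
    rw [← h2]
    push_cast
    rw [hcρ p, hd]
    ring
  have hL : 2 * (∑ r : Fin ℓ, (resCount e ℓ ((κ r : ZMod e)) ρ : ℚ))
      - (∑ r : Fin ℓ, (resCount e ℓ ((κ r : ZMod e)) μ : ℚ))
      - (∑ r : Fin ℓ, (resCount e ℓ ((κ r : ZMod e)) lam : ℚ)) = 0 := by
    rw [Finset.mul_sum, ← Finset.sum_sub_distrib, ← Finset.sum_sub_distrib]
    exact Finset.sum_eq_zero (fun r _ => by rw [hcρ, hcl]; ring)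
  have hQ : 2 * (∑ p : ZMod e, ((resCount e ℓ p ρ : ℚ) - (resCount e ℓ (p+1) ρ : ℚ))^2)
      - (∑ p : ZMod e, ((resCount e ℓ p μ : ℚ) - (resCount e ℓ (p+1) μ : ℚ))^2)
      - (∑ p : ZMod e, ((resCount e ℓ p lam : ℚ) - (resCount e ℓ (p+1) lam : ℚ))^2)
      = ∑ p : ZMod e, (-2) * (d p - d (p+1))^2 := by
    rw [Finset.mul_sum, ← Finset.sum_sub_distrib, ← Finset.sum_sub_distrib]
    exact Finset.sum_congr rfl
      (fun p _ => by rw [hcρ p, hcρ (p+1), hcl p, hcl (p+1)]; ring)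
  have key2 : 2 * defect e ℓ κ ρ - defect e ℓ κ μ - defect e ℓ κ lam
      = ∑ p : ZMod e, (d p - d (p+1))^2 := by
    have hneg : ∑ p : ZMod e, (-2 : ℚ) * (d p - d (p+1))^2
        = -2 * ∑ p : ZMod e, (d p - d (p+1))^2 := by
      rw [Finset.mul_sum]
    rw [hneg] at hQ
    unfold defect
    linarith [hL, hQ]
  have hsq : 0 ≤ ∑ p : ZMod e, (d p - d (p+1))^2 :=
    Finset.sum_nonneg (fun p _ => sq_nonneg _)
  rw [hdef] at key2
  have h1 : ∑ p : ZMod e, (d p - d (p+1))^2 = 0 := le_antisymm (by linarith) hsq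
  have hδ : ∀ p : ZMod e, d p = d (p+1) := by
    intro p
    have h2 := (Finset.sum_eq_zero_iff_of_nonneg
      (fun p _ => sq_nonneg (d p - d (p+1)))).1 h1 p (Finset.mem_univ p)
    have h3 : d p - d (p+1) = 0 := by
      have := sq_eq_zero_iff.1 h2
      exact this
    linarith
  have hμdef : defect e ℓ κ μ = 0 := by linarith
  have hconst : ∀ p q : ZMod e, d p = d q := by
    have hnat : ∀ (m : ℕ) (p : ZMod e), d (p + (m : ZMod e)) = d p := by
      intro m
      induction m with
      | zero => intro p; simp
      | succ m ih =>
        intro p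
        have hcast : ((m + 1 : ℕ) : ZMod e) = (m : ZMod e) + 1 := by push_cast; ring
        rw [hcast, ← add_assoc, ← hδ (p + (m : ZMod e)), ih p]
    intro p q
    obtain ⟨m, hm⟩ := ZMod.natCast_zmod_surjective (q - p)
    have hq : q = p + (m : ZMod e) := by rw [hm]; ring
    rw [hq, hnat m p]
  have hQeq : ∑ p : ZMod e, ((resCount e ℓ p ρ : ℚ) - (resCount e ℓ (p+1) ρ : ℚ))^2
      = ∑ p : ZMod e, ((resCount e ℓ p μ : ℚ) - (resCount e ℓ (p+1) μ : ℚ))^2 :=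
    Finset.sum_congr rfl (fun p _ => by rw [hcρ p, hcρ (p+1), hδ p]; ring)
  have hLeq : ∑ r : Fin ℓ, (resCount e ℓ ((κ r : ZMod e)) ρ : ℚ)
      = (∑ r : Fin ℓ, (resCount e ℓ ((κ r : ZMod e)) μ : ℚ))
        + ∑ r : Fin ℓ, d ((κ r : ZMod e)) := by
    rw [← Finset.sum_add_distrib]
    exact Finset.sum_congr rfl (fun r _ => hcρ _)
  have key3 : defect e ℓ κ ρ - defect e ℓ κ μ = ∑ r : Fin ℓ, d ((κ r : ZMod e)) := by
    unfold defect
    rw [hQeq, hLeq]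
    ring
  have hzero : ∑ r : Fin ℓ, d ((κ r : ZMod e)) = 0 := by
    rw [← key3, hdef, hμdef]
    ring
  have hnonempty : (ρ \ μ).Nonempty := by
    rw [Finset.sdiff_nonempty]
    exact fun h => hμρ.2 h
  obtain ⟨u, hu⟩ := hnonempty
  have hr0 : d ((κ u.1 : ZMod e)) = 0 := by
    have hnonneg : ∀ r ∈ Finset.univ, (0:ℚ) ≤ d ((κ r : ZMod e)) := by
      intro r _
      rw [hd]
      exact Nat.cast_nonneg _
    exact (Finset.sum_eq_zero_iff_of_nonneg hnonneg).1 hzero u.1 (Finset.mem_univ _)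
  have hall : ∀ p, d p = 0 := fun p => by rw [hconst p ((κ u.1 : ZMod e)), hr0]
  have htot : ∑ p : ZMod e, d p = ((ρ \ μ).card : ℚ) := by
    have h := congrArg (fun n : ℕ => (n : ℚ)) (S2.sum_resCount (e := e) (ρ \ μ))
    push_cast at h
    rw [hd]
    exact h
  have hcard : (0:ℚ) < ((ρ \ μ).card : ℚ) := by
    exact_mod_cast Finset.card_pos.2 ⟨u, hu⟩
  rw [Finset.sum_eq_zero (fun p _ => hall p)] at htot
  linarith
end

section
/- Let ρ be a κ-core, i.e. an ℓ-multipartition of multicharge κ satisfying: for all components r, s with κ̄_r ≤ κ̄_s (as residues in [0,e−1]), the beta-number sets satisfy Bʳ(ρ,κ) ⊆ Bˢ(ρ,κ) ⊆ e + Bʳ(ρ,κ). Then for all residues i,j ∈ [0,e−1] and all components r,s ∈ [1,ℓ], we have |hʳ_{i,j}(ρ,κ) − hˢ_{i,j}(ρ,κ)| ≤ 1, where hʳ_{i,j}(ρ,κ) := ⌊(Mʳ_j(ρ,κ) − Mʳ_i(ρ,κ))/e⌋ and Mʳ_i(ρ,κ) is the maximal element of Bʳ(ρ,κ) congruent to i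 mod e. -/
/-- A partition, encoded as a weakly decreasing eventually-zero sequence of parts
(`p a` is the `(a+1)`-st part). -/
def IsPartitionFun (p : ℕ → ℕ) : Prop :=
  Antitone p ∧ ∃ N : ℕ, ∀ a : ℕ, N ≤ a → p a = 0

/-- The beta-number set `{c + p_a − a : a ∈ ℤ_{>0}}` of the partition `p` with
charge `c`. -/
def betaSet (c : ℤ) (p : ℕ → ℕ) : Set ℤ :=
  {x | ∃ a : ℕ, x = c + (p a : ℤ) - ((a : ℤ) + 1)}

/-- `Mmax e B i`: the maximal element of `B` congruent to `i` mod `e`. -/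
noncomputable def Mmax (e : ℕ) (B : Set ℤ) (i : ZMod e) : ℤ :=
  sSup {x ∈ B | (x : ZMod e) = i}

/-- `hIdx e B i j = ⌊(M_j − M_i)/e⌋`. -/
noncomputable def hIdx (e : ℕ) (B : Set ℤ) (i j : ZMod e) : ℤ :=
  (Mmax e B j - Mmax e B i).fdiv (e : ℤ)

lemma betaSet_bddAbove (c : ℤ) (p : ℕ → ℕ) (hp : IsPartitionFun p) :
    BddAbove (betaSet c p) := by
  refine ⟨c + (p 0 : ℤ), ?_⟩
  rintro x ⟨a, rfl⟩
  have h1 : p a ≤ p 0 := hp.1 (Nat.zero_le a)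
  have : (p a : ℤ) ≤ (p 0 : ℤ) := by exact_mod_cast h1
  have ha : (0:ℤ) ≤ a := Int.ofNat_nonneg a
  linarith

lemma class_nonempty (e : ℕ) (he : 1 < e) (c : ℤ) (p : ℕ → ℕ) (hp : IsPartitionFun p)
    (i : ZMod e) : {x ∈ betaSet c p | (x : ZMod e) = i}.Nonempty := by
  haveI : NeZero e := ⟨by omega⟩
  obtain ⟨N, hN⟩ := hp.2
  set t : ZMod e := (c : ZMod e) - 1 - i with ht
  set a : ℕ := N * e + t.val with ha
  have haN : N ≤ a := by
    have : 1 ≤ e := by omega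
    calc N = N * 1 := (mul_one N).symm
      _ ≤ N * e := Nat.mul_le_mul_left N this
      _ ≤ a := Nat.le_add_right _ _
  refine ⟨c + (p a : ℤ) - ((a : ℤ) + 1), ⟨⟨a, rfl⟩, ?_⟩⟩
  rw [hN a haN]
  push_cast
  have hat : ((a : ℕ) : ZMod e) = t := by
    rw [ha]
    push_cast
    simp [ZMod.natCast_self, ZMod.natCast_val, ZMod.cast_id]
  rw [hat, ht]
  ring

lemma Mmax_mem (e : ℕ) (he : 1 < e) (c : ℤ) (p : ℕ → ℕ) (hp : IsPartitionFun p)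
    (i : ZMod e) : Mmax e (betaSet c p) i ∈ {x ∈ betaSet c p | (x : ZMod e) = i} :=
  Int.csSup_mem (class_nonempty e he c p hp i)
    ((betaSet_bddAbove c p hp).mono (Set.sep_subset _ _))

lemma Mmax_mono (e : ℕ) (he : 1 < e) (c c' : ℤ) (p p' : ℕ → ℕ)
    (hp : IsPartitionFun p) (hp' : IsPartitionFun p')
    (hsub : betaSet c p ⊆ betaSet c' p') (i : ZMod e) :
    Mmax e (betaSet c p) i ≤ Mmax e (betaSet c' p') i := by
  apply csSup_le_csSup ((betaSet_bddAbove c' p' hp').mono (Set.sep_subset _ _))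
    (class_nonempty e he c p hp i)
  rintro x ⟨hx, hxi⟩
  exact ⟨hsub hx, hxi⟩

lemma Mmax_le_add (e : ℕ) (he : 1 < e) (c c' : ℤ) (p p' : ℕ → ℕ)
    (hp : IsPartitionFun p) (hp' : IsPartitionFun p')
    (hsub : betaSet c' p' ⊆ {x : ℤ | x - (e : ℤ) ∈ betaSet c p}) (i : ZMod e) :
    Mmax e (betaSet c' p') i ≤ Mmax e (betaSet c p) i + e := by
  apply csSup_le (class_nonempty e he c' p' hp' i)
  rintro x ⟨hx, hxi⟩
  have hmem : x - (e : ℤ) ∈ {y ∈ betaSet c p | (y : ZMod e) = i} := by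
    refine ⟨hsub hx, ?_⟩
    push_cast
    simp [hxi]
  have := le_csSup ((betaSet_bddAbove c p hp).mono (Set.sep_subset _ _)) hmem
  unfold Mmax
  linarith

lemma hIdx_close (e : ℕ) (he : 1 < e) (c c' : ℤ) (p p' : ℕ → ℕ)
    (hp : IsPartitionFun p) (hp' : IsPartitionFun p')
    (hsub1 : betaSet c p ⊆ betaSet c' p')
    (hsub2 : betaSet c' p' ⊆ {x : ℤ | x - (e : ℤ) ∈ betaSet c p})
    (i j : ZMod e) :
    |hIdx e (betaSet c p) i j - hIdx e (betaSet c' p') i j| ≤ 1 := by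
  have hepos : (0:ℤ) < e := by exact_mod_cast Nat.lt_of_lt_of_le Nat.zero_lt_one he.le
  set Mi := Mmax e (betaSet c p) i
  set Mj := Mmax e (betaSet c p) j
  set Mi' := Mmax e (betaSet c' p') i
  set Mj' := Mmax e (betaSet c' p') j
  have h1 : Mi ≤ Mi' := Mmax_mono e he c c' p p' hp hp' hsub1 i
  have h2 : Mi' ≤ Mi + e := Mmax_le_add e he c c' p p' hp hp' hsub2 i
  have h3 : Mj ≤ Mj' := Mmax_mono e he c c' p p' hp hp' hsub1 j
  have h4 : Mj' ≤ Mj + e := Mmax_le_add e he c c' p p' hp hp' hsub2 j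
  have hfd : ∀ a : ℤ, a.fdiv (e:ℤ) = a / (e:ℤ) := fun a => Int.fdiv_eq_ediv_of_nonneg a hepos.le
  unfold hIdx
  rw [hfd, hfd]
  set D := Mj - Mi
  set D' := Mj' - Mi'
  have hlow : D - e ≤ D' := by simp only [D, D']; linarith
  have hhigh : D' ≤ D + e := by simp only [D, D']; linarith
  have e1 : (D - e) / (e:ℤ) = D / e - 1 := by
    have := Int.add_mul_ediv_right D (-1) (show (e:ℤ) ≠ 0 by linarith)
    rw [show D + -1 * e = D - e by ring] at this
    omega
  have e2 : (D + e) / (e:ℤ) = D / e + 1 := by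
    have := Int.add_mul_ediv_right D 1 (show (e:ℤ) ≠ 0 by linarith)
    rw [show D + 1 * e = D + e by ring] at this
    omega
  have l1 : (D - e) / (e:ℤ) ≤ D' / e := Int.ediv_le_ediv hepos hlow
  have l2 : D' / (e:ℤ) ≤ (D + e) / e := Int.ediv_le_ediv hepos hhigh
  rw [e1] at l1; rw [e2] at l2
  rw [abs_le]
  omega

/-- If `ρ` is a `κ`-core, i.e. `Bʳ ⊆ Bˢ ⊆ e + Bʳ` whenever `κ̄_r ≤ κ̄_s`, then
`|hʳ_{i,j} − hˢ_{i,j}| ≤ 1` for all residues `i,j` and components `r,s`. -/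
theorem statement5 (e ℓ : ℕ) (he : 1 < e) (κ : Fin ℓ → ℤ) (ρ : Fin ℓ → ℕ → ℕ)
    (hpart : ∀ r, IsPartitionFun (ρ r))
    (hcore : ∀ r s : Fin ℓ, κ r % (e : ℤ) ≤ κ s % (e : ℤ) →
      betaSet (κ r) (ρ r) ⊆ betaSet (κ s) (ρ s) ∧
      betaSet (κ s) (ρ s) ⊆ {x : ℤ | x - (e : ℤ) ∈ betaSet (κ r) (ρ r)}) :
    ∀ (i j : ZMod e) (r s : Fin ℓ),
      |hIdx e (betaSet (κ r) (ρ r)) i j - hIdx e (betaSet (κ s) (ρ s)) i j| ≤ 1 := by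
  intro i j r s
  rcases le_total (κ r % (e : ℤ)) (κ s % (e : ℤ)) with h | h
  · obtain ⟨h1, h2⟩ := hcore r s h
    exact hIdx_close e he (κ r) (κ s) (ρ r) (ρ s) (hpart r) (hpart s) h1 h2 i j
  · obtain ⟨h1, h2⟩ := hcore s r h
    rw [abs_sub_comm]
    exact hIdx_close e he (κ s) (κ r) (ρ s) (ρ r) (hpart s) (hpart r) h1 h2 i j
end

section
/- Let θ = (θ_1,…,θ_e) be a permutation of the residues [0,e−1], and let ρ be a multicore of multicharge κ (meaning x ∈ Bʳ(ρ,κ) implies x − e ∈ Bʳ(ρ,κ) for all r). Then ρ is (κ,θ)-RoCK — meaning: whenever y ∈ Bʳ(ρ,κ), x ∉ Bʳ(ρ,κ), x < y, with x̄ = θ_a and ȳ = θ_b, one has a ≤ b — if and only if hʳ_{θ_a,θ_b}(ρ,κ) ≥ −1 for all r ∈ [1,ℓ] and all 1 ≤ a < b ≤ e. -/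
lemma betaSet_res_nonempty (e : ℕ) (he : 0 < e) (c : ℤ) (p : ℕ → ℕ)
    (hp : IsPartitionFun p) (i : ZMod e) :
    ∃ x ∈ betaSet c p, (x : ZMod e) = i := by
  haveI : NeZero e := ⟨he.ne'⟩
  obtain ⟨N, hN⟩ := hp.2
  set j : ZMod e := (c : ZMod e) - 1 - i with hj
  set a : ℕ := j.val + e * N with ha
  have haN : N ≤ a := by
    have : N ≤ e * N := Nat.le_mul_of_pos_left N he
    omega
  refine ⟨c + (p a : ℤ) - ((a : ℤ) + 1), ⟨a, rfl⟩, ?_⟩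
  have hpa : p a = 0 := hN a haN
  have hacast : ((a : ℕ) : ZMod e) = j := by
    rw [ha]; push_cast; simp
  rw [hpa]
  push_cast
  rw [hacast, hj]
  ring

lemma Mmax_spec (e : ℕ) (he : 0 < e) (c : ℤ) (p : ℕ → ℕ) (hp : IsPartitionFun p)
    (i : ZMod e) :
    Mmax e (betaSet c p) i ∈ betaSet c p ∧ ((Mmax e (betaSet c p) i : ℤ) : ZMod e) = i ∧
      ∀ x ∈ betaSet c p, (x : ZMod e) = i → x ≤ Mmax e (betaSet c p) i := by
  set S : Set ℤ := {x ∈ betaSet c p | (x : ZMod e) = i} with hS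
  have hne : S.Nonempty := by
    obtain ⟨x, hx, hxi⟩ := betaSet_res_nonempty e he c p hp i
    exact ⟨x, hx, hxi⟩
  have hbdd : BddAbove S := (betaSet_bddAbove c p hp).mono (fun x hx => hx.1) |>.mono le_rfl
  have hmem : sSup S ∈ S := Int.csSup_mem hne hbdd
  exact ⟨hmem.1, hmem.2, fun x hx hxi => le_csSup hbdd ⟨hx, hxi⟩⟩

/-- A multicore `ρ` is `(κ,θ)`-RoCK (whenever `y ∈ Bʳ`, `x ∉ Bʳ`, `x < y`, with
`x̄ = θ_a`, `ȳ = θ_b`, one has `a ≤ b`) iff `hʳ_{θ_a,θ_b} ≥ −1` for all `r` and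
`a < b`. -/
theorem statement6 (e ℓ : ℕ) (he : 1 < e) (κ : Fin ℓ → ℤ) (ρ : Fin ℓ → ℕ → ℕ)
    (hpart : ∀ r, IsPartitionFun (ρ r))
    (θ : Fin e → ZMod e) (hθ : Function.Bijective θ)
    (hmc : ∀ (r : Fin ℓ) (x : ℤ),
      x ∈ betaSet (κ r) (ρ r) → x - (e : ℤ) ∈ betaSet (κ r) (ρ r)) :
    (∀ (r : Fin ℓ) (x y : ℤ) (a b : Fin e),
        y ∈ betaSet (κ r) (ρ r) → x ∉ betaSet (κ r) (ρ r) → x < y →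
        (x : ZMod e) = θ a → (y : ZMod e) = θ b → a ≤ b) ↔
      (∀ (r : Fin ℓ) (a b : Fin e), a < b →
        -1 ≤ hIdx e (betaSet (κ r) (ρ r)) (θ a) (θ b)) := by
  have hep : 0 < e := by omega
  have he0 : (0:ℤ) < e := by exact_mod_cast hep
  -- descent into the beta set
  have hdesc : ∀ (r : Fin ℓ) (x : ℤ) (k : ℕ), x ∈ betaSet (κ r) (ρ r) →
      x - (k : ℤ) * e ∈ betaSet (κ r) (ρ r) := by
    intro r x k hx
    induction k with
    | zero => simpa using hx
    | succ n ih =>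
      have := hmc r _ ih
      have heq : x - ((n:ℤ)+1) * e = x - (n:ℤ) * e - e := by ring
      push_cast
      rw [heq]
      exact this
  -- if x ∉ B and x has residue i, then Mmax + e ≤ x
  have hnotmem : ∀ (r : Fin ℓ) (x : ℤ) (i : ZMod e),
      x ∉ betaSet (κ r) (ρ r) → (x : ZMod e) = i →
      Mmax e (betaSet (κ r) (ρ r)) i + e ≤ x := by
    intro r x i hx hxi
    obtain ⟨hMmem, hMres, _⟩ := Mmax_spec e hep (κ r) (ρ r) (hpart r) i
    set M := Mmax e (betaSet (κ r) (ρ r)) i with hM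
    have hcong : (e:ℤ) ∣ M - x := by
      have : (x : ZMod e) = (M : ZMod e) := by rw [hxi, hMres]
      exact ((ZMod.intCast_eq_intCast_iff x M e).mp this).dvd
    obtain ⟨k, hk⟩ := hcong
    by_contra hlt
    push_neg at hlt
    -- x < M + e, so M - x = e * k with k > -1, i.e. k ≥ 0; if k ≥ 0 then x ∈ B
    have hk0 : 0 ≤ k := by nlinarith
    lift k to ℕ using hk0
    have : x = M - (k:ℤ) * e := by linarith [hk]
    rw [this] at hx
    exact hx (hdesc r M k hMmem)
  constructor
  · -- RoCK → hIdx ≥ -1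
    intro hrock r a b hab
    obtain ⟨hAmem, hAres, _⟩ := Mmax_spec e hep (κ r) (ρ r) (hpart r) (θ a)
    obtain ⟨hBmem, hBres, hBmax⟩ := Mmax_spec e hep (κ r) (ρ r) (hpart r) (θ b)
    set Ma := Mmax e (betaSet (κ r) (ρ r)) (θ a)
    set Mb := Mmax e (betaSet (κ r) (ρ r)) (θ b)
    rw [hIdx, Int.fdiv_eq_ediv_of_nonneg _ he0.le, Int.le_ediv_iff_mul_le he0]
    by_contra hcon
    push_neg at hcon
    have hlt : Mb + e < Ma := by nlinarith
    -- take y = Ma ∈ B, x = Mb + e ∉ B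
    have hxnot : Mb + e ∉ betaSet (κ r) (ρ r) := by
      intro hmem
      have hres : ((Mb + e : ℤ) : ZMod e) = θ b := by push_cast; simp [hBres]
      have := hBmax _ hmem hres
      linarith
    have hxres : ((Mb + e : ℤ) : ZMod e) = θ b := by push_cast; simp [hBres]
    have := hrock r (Mb + e) Ma b a hAmem hxnot hlt hxres hAres
    exact absurd (lt_of_lt_of_le hab this) (lt_irrefl a)
  · -- hIdx ≥ -1 → RoCK
    intro hh r x y a b hy hx hxy hxa hyb
    by_contra hab
    push_neg at hab  -- b < a
    have hge := hh r b a hab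
    rw [hIdx, Int.fdiv_eq_ediv_of_nonneg _ he0.le, Int.le_ediv_iff_mul_le he0] at hge
    obtain ⟨_, _, hAmax⟩ := Mmax_spec e hep (κ r) (ρ r) (hpart r) (θ b)
    set Ma := Mmax e (betaSet (κ r) (ρ r)) (θ a)
    set Mb := Mmax e (betaSet (κ r) (ρ r)) (θ b)
    have h1 : Ma + e ≤ x := hnotmem r x (θ a) hx hxa
    have h2 : y ≤ Mb := hAmax y hy hyb
    -- hge : -1 * e ≤ Ma - Mb
    linarith
end

section
/- Let ≽ be a convex preorder on the positive roots Φ₊ of affine type A_{e-1}^{(1)}. Define a relation <* on [0,e−1] by: for i < j, set i <* j if α(i+1, j−i) ∈ Φ_{≻δ}, and j <* i if δ − α(i+1, j−i) ∈ Φ_{≻δ}. Then <* is a strict total order on [0,e−1]; in particular, <* is transitive. -/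
/-- The positive root `α(t,L) = α_{t̄} + ⋯ + α_{t̄+L-1}` of affine type `A_{e-1}^{(1)}`,
as an element of the root lattice `ZMod e → ℤ`. -/
def alphaRoot (e : ℕ) (t : ℤ) (L : ℕ) : ZMod e → ℤ := fun j =>
  (((Finset.range L).filter (fun k : ℕ => ((t + (k : ℤ) : ℤ) : ZMod e) = j)).card : ℤ)

/-- The null root `δ = α_0 + α_1 + ⋯ + α_{e-1}`. -/
def deltaRoot (e : ℕ) : ZMod e → ℤ := fun _ => 1

/-- The set `Φ₊` of positive roots of affine type `A_{e-1}^{(1)}`. -/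
def PhiPos (e : ℕ) : Set (ZMod e → ℤ) :=
  {β | ∃ t : ℤ, ∃ L : ℕ, 0 < L ∧ β = alphaRoot e t L}

/-- Imaginary roots: positive multiples of the null root `δ`. -/
def ImaginaryRoot (e : ℕ) (β : ZMod e → ℤ) : Prop :=
  ∃ m : ℕ, 0 < m ∧ β = fun _ => (m : ℤ)

/-- A convex preorder on `Φ₊`: reflexive, transitive, total, convex, and with mutual
comparability exactly for equal or both-imaginary roots. -/
structure ConvexPreorderOn (e : ℕ) where
  rel : (ZMod e → ℤ) → (ZMod e → ℤ) → Prop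
  refl : ∀ β ∈ PhiPos e, rel β β
  trans : ∀ β γ ν, β ∈ PhiPos e → γ ∈ PhiPos e → ν ∈ PhiPos e →
    rel β γ → rel γ ν → rel β ν
  total : ∀ β γ, β ∈ PhiPos e → γ ∈ PhiPos e → rel β γ ∨ rel γ β
  convex : ∀ β γ, β ∈ PhiPos e → γ ∈ PhiPos e → rel β γ → β + γ ∈ PhiPos e →
    rel β (β + γ) ∧ rel (β + γ) γ
  imag_equiv : ∀ β γ, β ∈ PhiPos e → γ ∈ PhiPos e →
    ((rel β γ ∧ rel γ β) ↔ (β = γ ∨ (ImaginaryRoot e β ∧ ImaginaryRoot e γ)))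

/-- The strict relation `β ≻ γ` associated to a convex preorder. -/
def GtRel {e : ℕ} (P : ConvexPreorderOn e) (β γ : ZMod e → ℤ) : Prop :=
  P.rel β γ ∧ ¬ P.rel γ β

/-- The relation `<*` on residues `[0, e−1]`: for `i < j`, `i <* j` iff
`α(i+1, j−i) ∈ Φ_{≻δ}`, and `j <* i` iff `δ − α(i+1, j−i) ∈ Φ_{≻δ}`. -/
def ltStar (e : ℕ) (P : ConvexPreorderOn e) (i j : ℕ) : Prop :=
  (i < j ∧ GtRel P (alphaRoot e ((i : ℤ) + 1) (j - i)) (deltaRoot e)) ∨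
  (j < i ∧ GtRel P (deltaRoot e - alphaRoot e ((j : ℤ) + 1) (i - j)) (deltaRoot e))

/-! Write `d(i, j) ∈ [1, e - 1]` for the length of the cyclic arc `i + 1, …, j` modulo `e`; both
clauses of the definition say that `i <* j` iff `α(i + 1, d(i, j)) ≻ δ`. Convexity gives two facts:
if `β, γ ≻ δ` and `β + γ` is a root then `β + γ ≻ δ`, and `β + δ ≻ δ` forces `β ≻ δ`.
For transitivity, concatenate the arcs `i → j` and `j → k`: the result has length `d(i, k)` or
`d(i, k) + e` (never `e`, as `δ ⊁ δ`), so it reduces to `α(i + 1, d(i, k)) ≻ δ`. For totality, the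
arcs `i → j` and `j → i` are real roots with sum `δ`, so exactly one of them lies above `δ`. -/

variable {e : ℕ}

lemma alphaRoot_apply (t : ℤ) (L : ℕ) (j : ZMod e) :
    alphaRoot e t L j = ∑ k ∈ Finset.range L, if ((t + k : ℤ) : ZMod e) = j then 1 else 0 :=
  Finset.natCast_card_filter _ _

lemma alphaRoot_congr {t t' : ℤ} (h : (t : ZMod e) = t') (L : ℕ) :
    alphaRoot e t L = alphaRoot e t' L := by
  funext j
  simp only [alphaRoot_apply, Int.cast_add, h]

lemma alphaRoot_add (t : ℤ) (L M : ℕ) :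
    alphaRoot e t (L + M) = alphaRoot e t L + alphaRoot e (t + L) M := by
  funext j
  simp only [alphaRoot_apply, Finset.sum_range_add, Pi.add_apply, Nat.cast_add, add_assoc]

lemma alphaRoot_add_alphaRoot {s t : ℤ} {L : ℕ} (h : (s : ZMod e) = ((t + L : ℤ) : ZMod e))
    (M : ℕ) : alphaRoot e t L + alphaRoot e s M = alphaRoot e t (L + M) := by
  rw [alphaRoot_add, alphaRoot_congr h]

lemma alphaRoot_self [NeZero e] (t : ℤ) : alphaRoot e t e = deltaRoot e := by
  funext j
  simp only [alphaRoot, deltaRoot, Nat.cast_eq_one, Finset.card_eq_one]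
  refine ⟨(j - t).val, Finset.ext fun k => ?_⟩
  simp only [Finset.mem_filter, Finset.mem_range, Finset.mem_singleton]
  constructor
  · rintro ⟨hk, hkj⟩
    rw [← ZMod.val_cast_of_lt hk, ← hkj]
    push_cast
    ring_nf
  · rintro rfl
    refine ⟨ZMod.val_lt _, ?_⟩
    push_cast
    rw [ZMod.natCast_zmod_val]
    ring

lemma alphaRoot_apply_end {L : ℕ} (hL : L < e) (t : ℤ) :
    alphaRoot e t L ((t + L : ℤ) : ZMod e) = 0 := by
  simp only [alphaRoot, Nat.cast_eq_zero, Finset.card_eq_zero, Finset.filter_eq_empty_iff,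
    Finset.mem_range]
  intro k hk hkL
  have := congrArg ZMod.val (show (k : ZMod e) = L by push_cast at hkL; linear_combination hkL)
  rw [ZMod.val_cast_of_lt (hk.trans hL), ZMod.val_cast_of_lt hL] at this
  omega

lemma alphaRoot_not_imaginary (t : ℤ) {L : ℕ} (hL : L < e) :
    ¬ ImaginaryRoot e (alphaRoot e t L) := by
  rintro ⟨m, hm, hβ⟩
  have := alphaRoot_apply_end hL t
  rw [hβ] at this
  exact hm.ne' (Int.ofNat_eq_zero.mp this)

lemma deltaRoot_imaginary : ImaginaryRoot e (deltaRoot e) := ⟨1, one_pos, rfl⟩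

lemma alphaRoot_mem_phiPos (t : ℤ) {L : ℕ} (hL : 0 < L) : alphaRoot e t L ∈ PhiPos e :=
  ⟨t, L, hL, rfl⟩

lemma deltaRoot_mem_phiPos [NeZero e] : deltaRoot e ∈ PhiPos e :=
  ⟨0, e, Nat.pos_of_neZero e, (alphaRoot_self 0).symm⟩

lemma deltaRoot_sub_alphaRoot [NeZero e] (t : ℤ) {L : ℕ} (hL : L ≤ e) :
    deltaRoot e - alphaRoot e t L = alphaRoot e (t + L) (e - L) := by
  rw [← alphaRoot_self t, ← Nat.add_sub_cancel' hL, alphaRoot_add, Nat.add_sub_cancel' hL,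
    add_sub_cancel_left]

namespace ConvexPreorderOn

variable (P : ConvexPreorderOn e) {β γ ν : ZMod e → ℤ}

lemma rel_of_not_gtRel (hβ : β ∈ PhiPos e) (hγ : γ ∈ PhiPos e) (h : ¬ GtRel P β γ) :
    P.rel γ β := by
  by_contra h'
  exact h ⟨(P.total β γ hβ hγ).resolve_right h', h'⟩

lemma gtRel_of_rel_of_gtRel (hβ : β ∈ PhiPos e) (hγ : γ ∈ PhiPos e) (hν : ν ∈ PhiPos e)
    (h₁ : P.rel β γ) (h₂ : GtRel P γ ν) : GtRel P β ν :=
  ⟨P.trans _ _ _ hβ hγ hν h₁ h₂.1, fun h => h₂.2 (P.trans _ _ _ hν hβ hγ h h₁)⟩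

lemma add_between (hβ : β ∈ PhiPos e) (hγ : γ ∈ PhiPos e) (hs : β + γ ∈ PhiPos e) :
    (P.rel β (β + γ) ∧ P.rel (β + γ) γ) ∨ (P.rel γ (β + γ) ∧ P.rel (β + γ) β) := by
  rcases P.total β γ hβ hγ with h | h
  · exact Or.inl (P.convex β γ hβ hγ h hs)
  · rw [add_comm] at hs ⊢
    exact Or.inr (P.convex γ β hγ hβ h hs)

lemma gtRel_add (hβ : β ∈ PhiPos e) (hγ : γ ∈ PhiPos e) (hν : ν ∈ PhiPos e)
    (hs : β + γ ∈ PhiPos e) (h₁ : GtRel P β ν) (h₂ : GtRel P γ ν) : GtRel P (β + γ) ν := by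
  rcases P.add_between hβ hγ hs with ⟨-, h⟩ | ⟨-, h⟩
  · exact P.gtRel_of_rel_of_gtRel hs hγ hν h h₂
  · exact P.gtRel_of_rel_of_gtRel hs hβ hν h h₁

lemma gtRel_of_gtRel_add (hβ : β ∈ PhiPos e) (hν : ν ∈ PhiPos e) (hs : β + ν ∈ PhiPos e)
    (h : GtRel P (β + ν) ν) : GtRel P β ν := by
  by_contra hc
  rw [add_comm] at hs h
  exact h.2 (P.convex ν β hν hβ (P.rel_of_not_gtRel hβ hν hc) hs).1

lemma gtRel_deltaRoot_of_rel [NeZero e] (hβ : β ∈ PhiPos e) (hβi : ¬ ImaginaryRoot e β)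
    (h : P.rel β (deltaRoot e)) : GtRel P β (deltaRoot e) := by
  refine ⟨h, fun h' => ?_⟩
  rcases (P.imag_equiv _ _ hβ deltaRoot_mem_phiPos).1 ⟨h, h'⟩ with rfl | ⟨hi, -⟩
  exacts [hβi deltaRoot_imaginary, hβi hi]

lemma gtRel_deltaRoot_iff_not [NeZero e] (hβ : β ∈ PhiPos e) (hγ : γ ∈ PhiPos e)
    (hβi : ¬ ImaginaryRoot e β) (hγi : ¬ ImaginaryRoot e γ) (hsum : β + γ = deltaRoot e) :
    GtRel P β (deltaRoot e) ↔ ¬ GtRel P γ (deltaRoot e) := by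
  have hδ : deltaRoot e ∈ PhiPos e := deltaRoot_mem_phiPos
  refine ⟨fun h₁ h₂ => ?_, fun h₂ => by_contra fun h₁ => ?_⟩
  · have h := P.gtRel_add hβ hγ hδ (hsum ▸ hδ) h₁ h₂
    rw [hsum] at h
    exact h.2 h.1
  · rcases P.add_between hβ hγ (hsum ▸ hδ) with ⟨h, -⟩ | ⟨h, -⟩ <;> rw [hsum] at h
    exacts [h₁ (P.gtRel_deltaRoot_of_rel hβ hβi h), h₂ (P.gtRel_deltaRoot_of_rel hγ hγi h)]

lemma gtRel_alphaRoot_mod [NeZero e] {t : ℤ} {L : ℕ} (hL₀ : 0 < L) (hL : L < e + e)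
    (h : GtRel P (alphaRoot e t L) (deltaRoot e)) :
    0 < L % e ∧ GtRel P (alphaRoot e t (L % e)) (deltaRoot e) := by
  rcases lt_trichotomy L e with hLe | rfl | hLe
  · rw [Nat.mod_eq_of_lt hLe]
    exact ⟨hL₀, h⟩
  · rw [alphaRoot_self] at h
    exact absurd h.1 h.2
  · obtain ⟨M, rfl⟩ : ∃ M, L = M + e := ⟨L - e, by omega⟩
    rw [Nat.add_mod_right, Nat.mod_eq_of_lt (by omega)]
    rw [alphaRoot_add, alphaRoot_self] at h
    refine ⟨by omega, P.gtRel_of_gtRel_add (alphaRoot_mem_phiPos _ (by omega))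
      deltaRoot_mem_phiPos ?_ h⟩
    rw [← alphaRoot_self (t + M), ← alphaRoot_add]
    exact alphaRoot_mem_phiPos _ (by omega)

end ConvexPreorderOn

section ltStar

variable {i j k : ℕ}

lemma ltStar_irrefl (P : ConvexPreorderOn e) (i : ℕ) : ¬ ltStar e P i i := by
  rintro (⟨h, -⟩ | ⟨h, -⟩) <;> exact lt_irrefl i h

lemma val_natCast_sub_natCast_pos (hi : i < e) (hj : j < e) (hij : i ≠ j) :
    0 < ((j : ZMod e) - i).val := by
  rw [Nat.pos_iff_ne_zero, Ne, ZMod.val_eq_zero, sub_eq_zero]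
  intro h
  have := congrArg ZMod.val h
  rw [ZMod.val_cast_of_lt hi, ZMod.val_cast_of_lt hj] at this
  exact hij this.symm

variable [NeZero e]

lemma intCast_add_val_natCast_sub (i j : ℕ) :
    ((j + 1 : ℤ) : ZMod e) = ((i + 1 + ((j : ZMod e) - i).val : ℤ) : ZMod e) := by
  push_cast
  rw [ZMod.natCast_val, ZMod.cast_id]
  ring

variable (P : ConvexPreorderOn e)

/- `((j : ZMod e) - i).val` is the length of the cyclic arc `i + 1, …, j`; when `j < i` the
definition of `<*` is brought to this form by `δ - α(j+1, i-j) = α(i+1, e-(i-j))`. -/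
lemma ltStar_iff (hi : i < e) (hj : j < e) :
    ltStar e P i j ↔ i ≠ j ∧
      GtRel P (alphaRoot e ((i : ℤ) + 1) ((j : ZMod e) - i).val) (deltaRoot e) := by
  rcases lt_trichotomy i j with h | rfl | h
  · have hv : ((j : ZMod e) - i).val = j - i := by
      rw [← Nat.cast_sub h.le, ZMod.val_cast_of_lt (by omega)]
    simp [ltStar, h, h.ne, hv, h.not_gt]
  · simp [ltStar]
  · have hv : ((j : ZMod e) - i).val = e - (i - j) := by
      have : (j : ZMod e) - i = ((e - (i - j) : ℕ) : ZMod e) := by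
        rw [Nat.cast_sub (by omega), Nat.cast_sub h.le, ZMod.natCast_self]
        ring
      rw [this, ZMod.val_cast_of_lt (by omega)]
    simp only [ltStar, h.not_gt, false_and, h, true_and, false_or, hv, ne_eq, h.ne',
      not_false_eq_true]
    rw [deltaRoot_sub_alphaRoot _ (by omega),
      show (j : ℤ) + 1 + ((i - j : ℕ) : ℤ) = (i : ℤ) + 1 by omega]

lemma ltStar_trans (hi : i < e) (hj : j < e) (hk : k < e) (hij : ltStar e P i j)
    (hjk : ltStar e P j k) : ltStar e P i k := by
  rw [ltStar_iff P hi hj] at hij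
  rw [ltStar_iff P hj hk] at hjk
  rw [ltStar_iff P hi hk]
  obtain ⟨hij, g₁⟩ := hij
  obtain ⟨hjk, g₂⟩ := hjk
  have ha := val_natCast_sub_natCast_pos hi hj hij
  have hb := val_natCast_sub_natCast_pos hj hk hjk
  have hsum : GtRel P (alphaRoot e ((i : ℤ) + 1)
      (((j : ZMod e) - i).val + ((k : ZMod e) - j).val)) (deltaRoot e) := by
    have hs : alphaRoot e ((i : ℤ) + 1) (((j : ZMod e) - i).val + ((k : ZMod e) - j).val)
        ∈ PhiPos e := alphaRoot_mem_phiPos _ (by omega)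
    rw [← alphaRoot_add_alphaRoot (intCast_add_val_natCast_sub i j)] at hs ⊢
    exact P.gtRel_add (alphaRoot_mem_phiPos _ ha) (alphaRoot_mem_phiPos _ hb)
      deltaRoot_mem_phiPos hs g₁ g₂
  have hlt := Nat.add_lt_add (ZMod.val_lt ((j : ZMod e) - (i : ZMod e)))
    (ZMod.val_lt ((k : ZMod e) - (j : ZMod e)))
  obtain ⟨hpos, h⟩ := P.gtRel_alphaRoot_mod (by omega) hlt hsum
  rw [← ZMod.val_add, sub_add_sub_cancel'] at hpos h
  exact ⟨by rintro rfl; simp at hpos, h⟩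

lemma ltStar_iff_not_ltStar (hi : i < e) (hj : j < e) (hij : i ≠ j) :
    ltStar e P i j ↔ ¬ ltStar e P j i := by
  rw [ltStar_iff P hi hj, ltStar_iff P hj hi]
  simp only [ne_eq, hij, Ne.symm hij, not_false_eq_true, true_and]
  have ha := val_natCast_sub_natCast_pos hi hj hij
  have hb := val_natCast_sub_natCast_pos hj hi (Ne.symm hij)
  have hsum : ((j : ZMod e) - i).val + ((i : ZMod e) - j).val = e := by
    rw [← neg_sub (j : ZMod e) i, ZMod.neg_val, if_neg (by rw [← ZMod.val_eq_zero]; omega)]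
    have := ZMod.val_lt ((j : ZMod e) - (i : ZMod e))
    omega
  apply P.gtRel_deltaRoot_iff_not (alphaRoot_mem_phiPos _ ha) (alphaRoot_mem_phiPos _ hb)
    (alphaRoot_not_imaginary _ (ZMod.val_lt _)) (alphaRoot_not_imaginary _ (ZMod.val_lt _))
  rw [alphaRoot_add_alphaRoot (intCast_add_val_natCast_sub i j), hsum, alphaRoot_self]

end ltStar

theorem statement8_general (e : ℕ) (P : ConvexPreorderOn e) :
    (∀ i : ℕ, i < e → ¬ ltStar e P i i) ∧
    (∀ i j k : ℕ, i < e → j < e → k < e →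
      ltStar e P i j → ltStar e P j k → ltStar e P i k) ∧
    (∀ i j : ℕ, i < e → j < e → i ≠ j → (ltStar e P i j ↔ ¬ ltStar e P j i)) := by
  refine ⟨fun i _ => ltStar_irrefl P i, fun i j k hi => ?_, fun i j hi => ?_⟩
  · have : NeZero e := ⟨by omega⟩
    exact ltStar_trans P hi
  · have : NeZero e := ⟨by omega⟩
    exact ltStar_iff_not_ltStar P hi

/-- `<*` is a strict total order on `[0, e−1]`: irreflexive, transitive, and for
distinct residues exactly one of `i <* j`, `j <* i` holds. -/
theorem statement8 (e : ℕ) (he : 1 < e) (P : ConvexPreorderOn e) :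
    (∀ i : ℕ, i < e → ¬ ltStar e P i i) ∧
    (∀ i j k : ℕ, i < e → j < e → k < e →
      ltStar e P i j → ltStar e P j k → ltStar e P i k) ∧
    (∀ i j : ℕ, i < e → j < e → i ≠ j → (ltStar e P i j ↔ ¬ ltStar e P j i)) :=
  statement8_general e P
end

section
/- Let θ be a permutation of [0,e−1] and let p: ℤI → ℤI/ℤδ ≅ ℤI^fin be reduction modulo δ (mapping α_0 to −(α_1+⋯+α_{e-1}) and fixing the other simple roots). Then P₊^θ := {p(γ^θ_{[a,b]}) : 1 ≤ a ≤ b ≤ e−1} is a system of positive roots for the finite root system Φ^fin of type A_{e-1}, with base Δ^θ := {p(γ^θ_a) : 1 ≤ a ≤ e−1}. In particular: (a) P₊^θ is closed under addition within Φ^fin; (b) P₊^θ ∩ (−P₊^θ) = ∅; (c) |P₊^θ| = e(e−1)/2; (d) every element of P₊^θ is a ℤ_{≥0}-combination of elements of Δ^θ. -/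
/-- `γ^θ_t := α(θ_t + 1, (θ_{t+1} − θ_t) mod e)`. -/
def gammaTheta (e : ℕ) (θ : ℕ → ℕ) (t : ℕ) : ZMod e → ℤ :=
  alphaRoot e ((θ t : ℤ) + 1) ((θ (t + 1) + e - θ t) % e)

/-- `γ^θ_{[a,b]} := γ^θ_a + ⋯ + γ^θ_b`. -/
def gammaInt (e : ℕ) (θ : ℕ → ℕ) (a b : ℕ) : ZMod e → ℤ :=
  ∑ t ∈ Finset.Icc a b, gammaTheta e θ t

/-- Reduction mod `δ`: `p(β) = β − β(0)·δ`, identifying `ℤI/ℤδ` with the functions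
vanishing at `0` (so `α_0 ↦ −(α_1+⋯+α_{e-1})` and `α_i ↦ α_i` otherwise). -/
def pFin (e : ℕ) (β : ZMod e → ℤ) : ZMod e → ℤ :=
  β - (fun _ => β 0)

/-- The finite type `A_{e-1}` root system
`Φ^fin = {±α(t,L) : t ∈ [1,e−1], L ∈ [1, e−t]}`. -/
def PhiFin (e : ℕ) : Set (ZMod e → ℤ) :=
  {β | ∃ t L : ℕ, 1 ≤ t ∧ t ≤ e - 1 ∧ 1 ≤ L ∧ L ≤ e - t ∧
    (β = alphaRoot e (t : ℤ) L ∨ β = -alphaRoot e (t : ℤ) L)}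

/-- `P₊^θ := {p(γ^θ_{[a,b]}) : 1 ≤ a ≤ b ≤ e−1}`. -/
def PposTheta (e : ℕ) (θ : ℕ → ℕ) : Set (ZMod e → ℤ) :=
  {β | ∃ a b : ℕ, 1 ≤ a ∧ a ≤ b ∧ b ≤ e - 1 ∧ β = pFin e (gammaInt e θ a b)}

/-! ### Auxiliary machinery -/

/-- `fV e u j = (j - 1 - u).val`, a "sawtooth" function on `ZMod e`. -/
def fV (e : ℕ) (u : ZMod e) : ZMod e → ℤ := fun j => ((j - 1 - u).val : ℤ)

/-- `DD e u v` is `e` times the finite root "`e_v − e_u`" in the `A_{e-1}` realization. -/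
def DD (e : ℕ) (u v : ZMod e) : ZMod e → ℤ :=
  fun j => fV e v j - fV e u j - (fV e v 0 - fV e u 0)

lemma alpha_apply (e : ℕ) [NeZero e] (t : ℤ) (L : ℕ) (hL : L ≤ e) (j : ZMod e) :
    alphaRoot e t L j = if ((j - (t : ZMod e)).val < L) then 1 else 0 := by
  have hfilter : (Finset.range L).filter (fun k : ℕ => ((t + (k : ℤ) : ℤ) : ZMod e) = j)
      = if ((j - (t : ZMod e)).val < L) then {(j - (t : ZMod e)).val} else ∅ := by
    ext k
    simp only [Finset.mem_filter, Finset.mem_range]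
    constructor
    · rintro ⟨hk, hcast⟩
      have h1 : ((k : ℕ) : ZMod e) = j - (t : ZMod e) := by
        push_cast at hcast
        linear_combination hcast
      have h2 : (j - (t : ZMod e)).val = k % e := by
        rw [← h1, ZMod.val_natCast]
      have h3 : k % e = k := Nat.mod_eq_of_lt (lt_of_lt_of_le hk hL)
      have : (j - (t : ZMod e)).val = k := by omega
      simp [this, hk]
    · intro hk
      split at hk
      · next h =>
        simp only [Finset.mem_singleton] at hk
        subst hk
        refine ⟨h, ?_⟩
        push_cast
        rw [ZMod.natCast_val, ZMod.cast_id]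
        ring
      · simp at hk
  rw [alphaRoot, hfilter]
  split <;> simp

lemma valB (e : ℕ) [NeZero e] (u v j : ZMod e) :
    (e : ℤ) * (if ((j - 1 - u).val < (v - u).val) then 1 else 0)
      = fV e v j + ((v - u).val : ℤ) - fV e u j := by
  have hx : j - 1 - u = (j - 1 - v) + (v - u) := by ring
  have hval : (j - 1 - u).val = ((j - 1 - v).val + (v - u).val) % e := by
    rw [hx, ZMod.val_add]
  have h1 : (j - 1 - v).val < e := ZMod.val_lt _
  have h2 : (v - u).val < e := ZMod.val_lt _
  simp only [fV]
  by_cases hc : (j - 1 - v).val + (v - u).val < e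
  · have : (j - 1 - u).val = (j - 1 - v).val + (v - u).val := by
      rw [hval, Nat.mod_eq_of_lt hc]
    rw [if_neg (by omega)]
    omega
  · have hm : ((j - 1 - v).val + (v - u).val) % e
        = (j - 1 - v).val + (v - u).val - e := by
      rw [Nat.mod_eq_sub_mod (by omega)]
      exact Nat.mod_eq_of_lt (by omega)
    have hnat : (j - 1 - u).val + e = (j - 1 - v).val + (v - u).val := by
      rw [hval, hm]; omega
    rw [if_pos (by omega)]
    omega

lemma modL (e a b : ℕ) [NeZero e] (hb : b < e) :
    ((a + e - b) % e : ℕ) = ((a : ZMod e) - (b : ZMod e)).val := by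
  have h1 : (a : ZMod e) - (b : ZMod e) = ((a + (e - b) : ℕ) : ZMod e) := by
    push_cast [Nat.cast_sub hb.le, ZMod.natCast_self]
    ring
  rw [h1, ZMod.val_natCast]
  congr 1
  omega

lemma gamma_eq (e : ℕ) [NeZero e] (θ : ℕ → ℕ) (t : ℕ) (hu : θ t < e) (j : ZMod e) :
    (e : ℤ) * gammaTheta e θ t j
      = fV e ((θ (t+1) : ℕ) : ZMod e) j
        + ((((θ (t+1) : ℕ) : ZMod e) - ((θ t : ℕ) : ZMod e)).val : ℤ)
        - fV e ((θ t : ℕ) : ZMod e) j := by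
  have hL : ((θ (t + 1) + e - θ t) % e) ≤ e := (Nat.mod_lt _ (NeZero.pos e)).le
  rw [gammaTheta, alpha_apply e _ _ hL j]
  rw [modL e (θ (t+1)) (θ t) hu]
  have hc : ((((θ t : ℤ) + 1) : ℤ) : ZMod e) = ((θ t : ℕ) : ZMod e) + 1 := by push_cast; ring
  rw [hc]
  have : j - (((θ t : ℕ) : ZMod e) + 1) = j - 1 - ((θ t : ℕ) : ZMod e) := by ring
  rw [this]
  exact valB e _ _ j

lemma gammaInt_eq (e : ℕ) [NeZero e] (θ : ℕ → ℕ) (a b : ℕ) (hab : a ≤ b)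
    (hlt : ∀ t, a ≤ t → t ≤ b → θ t < e) (j : ZMod e) :
    (e : ℤ) * gammaInt e θ a b j
      = fV e ((θ (b+1) : ℕ) : ZMod e) j - fV e ((θ a : ℕ) : ZMod e) j
        + ∑ t ∈ Finset.Icc a b, ((((θ (t+1) : ℕ) : ZMod e) - ((θ t : ℕ) : ZMod e)).val : ℤ) := by
  induction b with
  | zero =>
    have ha : a = 0 := by omega
    subst ha
    rw [gammaInt, Finset.Icc_self, Finset.sum_singleton, Finset.sum_singleton]
    have := gamma_eq e θ 0 (hlt 0 le_rfl le_rfl) j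
    linarith
  | succ b ih =>
    rcases Nat.eq_or_lt_of_le hab with h | h
    · rw [← h, gammaInt, Finset.Icc_self, Finset.sum_singleton, Finset.sum_singleton]
      have := gamma_eq e θ a (hlt a le_rfl (by omega)) j
      rw [← h] at *
      linarith
    · have hab' : a ≤ b := by omega
      have hg : gammaInt e θ a (b+1) = gammaInt e θ a b + gammaTheta e θ (b+1) := by
        rw [gammaInt, gammaInt, Finset.sum_Icc_succ_top (by omega : a ≤ b + 1)]
      have hsum : ∑ t ∈ Finset.Icc a (b+1), ((((θ (t+1):ℕ):ZMod e) - ((θ t:ℕ):ZMod e)).val : ℤ)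
          = (∑ t ∈ Finset.Icc a b, ((((θ (t+1):ℕ):ZMod e) - ((θ t:ℕ):ZMod e)).val : ℤ))
            + ((((θ (b+1+1):ℕ):ZMod e) - ((θ (b+1):ℕ):ZMod e)).val : ℤ) := by
        rw [Finset.sum_Icc_succ_top (by omega : a ≤ b + 1)]
      have ihh := ih hab' (fun t h1 h2 => hlt t h1 (by omega))
      have hge := gamma_eq e θ (b+1) (hlt (b+1) (by omega) le_rfl) j
      rw [hg, hsum]
      simp only [Pi.add_apply]
      linarith

lemma pFin_DD (e : ℕ) [NeZero e] (θ : ℕ → ℕ) (a b : ℕ) (hab : a ≤ b)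
    (hlt : ∀ t, a ≤ t → t ≤ b → θ t < e) (j : ZMod e) :
    (e : ℤ) * pFin e (gammaInt e θ a b) j
      = DD e ((θ a : ℕ) : ZMod e) ((θ (b+1) : ℕ) : ZMod e) j := by
  have h1 := gammaInt_eq e θ a b hab hlt j
  have h2 := gammaInt_eq e θ a b hab hlt 0
  simp only [pFin, Pi.sub_apply, DD]
  linarith

lemma val_step (e : ℕ) [NeZero e] (y : ZMod e) :
    (y.val : ℤ) - ((y - 1).val : ℤ) = 1 - e * (if y = 0 then 1 else 0) := by
  by_cases h : y = 0
  · subst h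
    simp only [if_pos rfl, zero_sub, ZMod.val_zero]
    have h1 : (-1 : ZMod e) = ((e - 1 : ℕ) : ZMod e) := by
      push_cast [Nat.cast_sub (NeZero.pos e), ZMod.natCast_self]
      ring
    rw [h1, ZMod.val_natCast, Nat.mod_eq_of_lt (by have := NeZero.pos e; omega)]
    have := NeZero.pos e
    push_cast [Nat.cast_sub this]
    ring
  · have h1 : 1 ≤ y.val := by
      rcases Nat.pos_of_ne_zero (fun hh => h (by rwa [← ZMod.val_eq_zero])) with h2
      omega
    have h2 : y - 1 = ((y.val - 1 : ℕ) : ZMod e) := by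
      push_cast [Nat.cast_sub h1, ZMod.natCast_val, ZMod.cast_id]
      ring
    rw [h2, if_neg h, ZMod.val_natCast, Nat.mod_eq_of_lt (by have := ZMod.val_lt y; omega)]
    omega

lemma fV_step (e : ℕ) [NeZero e] (u x : ZMod e) :
    fV e u (x + 1) - fV e u x = 1 - e * (if x = u then 1 else 0) := by
  have h0 : x + 1 - 1 - u = x - u := by ring
  have h2 : x - 1 - u = (x - u) - 1 := by ring
  simp only [fV, h0, h2]
  rw [val_step e (x - u)]
  congr 1
  by_cases h : x = u <;> simp [h, sub_eq_zero]

lemma DD_deriv (e : ℕ) [NeZero e] (u v x : ZMod e) :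
    DD e u v (x + 1) - DD e u v x
      = e * ((if x = u then 1 else 0) - (if x = v then 1 else 0)) := by
  have h1 := fV_step e u x
  have h2 := fV_step e v x
  simp only [DD]
  ring_nf
  ring_nf at h1 h2
  linarith

lemma chi_eq (e : ℕ) [NeZero e] {u v u' v' : ZMod e}
    (h : ∀ x, DD e u v x = DD e u' v' x) (x : ZMod e) :
    ((if x = u then (1:ℤ) else 0) - (if x = v then 1 else 0))
      = ((if x = u' then (1:ℤ) else 0) - (if x = v' then 1 else 0)) := by
  have he : (e : ℤ) ≠ 0 := by exact_mod_cast (NeZero.ne e)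
  have h1 := DD_deriv e u v x
  have h2 := DD_deriv e u' v' x
  rw [h x, h (x+1)] at h1
  rw [h1] at h2
  exact mul_left_cancel₀ he h2

lemma DD_inj (e : ℕ) [NeZero e] {u v u' v' : ZMod e} (huv : u ≠ v)
    (h : ∀ x, DD e u v x = DD e u' v' x) : u = u' ∧ v = v' := by
  constructor
  · have hthis := chi_eq e h u
    rw [if_pos rfl, if_neg huv] at hthis
    by_contra h1
    rw [if_neg h1] at hthis
    split_ifs at hthis <;> omega
  · have hthis := chi_eq e h v
    rw [if_pos rfl, if_neg (Ne.symm huv)] at hthis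
    by_contra h1
    rw [if_neg h1] at hthis
    split_ifs at hthis <;> omega

lemma alpha_DD (e : ℕ) [NeZero e] (t L : ℕ) (ht1 : 1 ≤ t) (ht2 : t ≤ e - 1)
    (hL1 : 1 ≤ L) (hL2 : L ≤ e - t) (x : ZMod e) :
    (e : ℤ) * alphaRoot e (t : ℤ) L x
      = DD e ((t - 1 : ℕ) : ZMod e) ((t + L - 1 : ℕ) : ZMod e) x := by
  have he := NeZero.pos e
  set u : ZMod e := ((t - 1 : ℕ) : ZMod e) with hu
  set v : ZMod e := ((t + L - 1 : ℕ) : ZMod e) with hv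
  have hsub : ∀ j : ZMod e, j - ((t : ℤ) : ZMod e) = j - 1 - u := by
    intro j
    rw [hu]
    push_cast [Nat.cast_sub ht1]
    ring
  have hvu : v - u = (L : ZMod e) := by
    rw [hu, hv]
    push_cast [Nat.cast_sub ht1, Nat.cast_sub (by omega : 1 ≤ t + L)]
    ring
  have hvuval : (v - u).val = L := by
    rw [hvu, ZMod.val_natCast, Nat.mod_eq_of_lt (by omega)]
  have key : ∀ j : ZMod e, (e : ℤ) * alphaRoot e (t : ℤ) L j
      = fV e v j + (L : ℤ) - fV e u j := by
    intro j
    rw [alpha_apply e _ _ (by omega) j, hsub j]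
    have := valB e u v j
    rw [hvuval] at this
    exact this
  have hzero : alphaRoot e (t : ℤ) L 0 = 0 := by
    rw [alpha_apply e _ _ (by omega) 0]
    have h0 : ((0 : ZMod e) - (t : ZMod e)) = ((e - t : ℕ) : ZMod e) := by
      push_cast [Nat.cast_sub (by omega : t ≤ e), ZMod.natCast_self]
      ring
    have : ((0 : ZMod e) - ((t:ℤ) : ZMod e)).val = e - t := by
      push_cast
      rw [h0, ZMod.val_natCast, Nat.mod_eq_of_lt (by omega)]
    rw [this, if_neg (by omega)]
  have h0 := key 0
  rw [hzero, mul_zero] at h0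
  have hx := key x
  simp only [DD]
  linarith

lemma DD_swap (e : ℕ) (u v : ZMod e) (x : ZMod e) : DD e v u x = - DD e u v x := by
  simp only [DD]; ring

lemma cast_val_eq (e : ℕ) [NeZero e] (u : ZMod e) : ((u.val : ℕ) : ZMod e) = u := by
  simp [ZMod.natCast_val, ZMod.cast_id]

lemma Ppos_char (e : ℕ) [NeZero e] (he : 1 < e) (θ : ℕ → ℕ)
    (hθ : Set.BijOn θ (Set.Icc 1 e) (Set.Iio e)) (β : ZMod e → ℤ) :
    β ∈ PposTheta e θ ↔ ∃ i j : ℕ, 1 ≤ i ∧ i < j ∧ j ≤ e ∧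
      ∀ x, (e : ℤ) * β x = DD e ((θ i : ℕ) : ZMod e) ((θ j : ℕ) : ZMod e) x := by
  have hmaps : ∀ t, 1 ≤ t → t ≤ e → θ t < e := fun t h1 h2 => hθ.mapsTo ⟨h1, h2⟩
  constructor
  · rintro ⟨a, b, ha, hab, hb, rfl⟩
    exact ⟨a, b + 1, ha, by omega, by omega,
      pFin_DD e θ a b hab (fun t h1 h2 => hmaps t (by omega) (by omega))⟩
  · rintro ⟨i, j, hi, hij, hj, hβ⟩
    refine ⟨i, j - 1, hi, by omega, by omega, ?_⟩
    have hj1 : j - 1 + 1 = j := by omega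
    have hpd := pFin_DD e θ i (j-1) (by omega)
      (fun t h1 h2 => hmaps t (by omega) (by omega))
    rw [hj1] at hpd
    funext x
    have he' : (e : ℤ) ≠ 0 := by exact_mod_cast (by omega : e ≠ 0)
    exact mul_left_cancel₀ he' ((hβ x).trans (hpd x).symm)

lemma Phi_char (e : ℕ) [NeZero e] (he : 1 < e) (β : ZMod e → ℤ) :
    β ∈ PhiFin e ↔ ∃ u v : ZMod e, u ≠ v ∧ ∀ x, (e : ℤ) * β x = DD e u v x := by
  have he' : (e : ℤ) ≠ 0 := by exact_mod_cast (by omega : e ≠ 0)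
  constructor
  · rintro ⟨t, L, ht1, ht2, hL1, hL2, hβ⟩
    set u : ZMod e := ((t - 1 : ℕ) : ZMod e)
    set v : ZMod e := ((t + L - 1 : ℕ) : ZMod e)
    have huv : u ≠ v := by
      intro h
      have hvu : v - u = (L : ZMod e) := by
        show (((t + L - 1 : ℕ) : ZMod e)) - (((t - 1 : ℕ) : ZMod e)) = _
        push_cast [Nat.cast_sub ht1, Nat.cast_sub (by omega : 1 ≤ t + L)]
        ring
      rw [← h, sub_self] at hvu
      have : (L : ZMod e).val = 0 := by rw [← hvu, ZMod.val_zero]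
      rw [ZMod.val_natCast, Nat.mod_eq_of_lt (by omega)] at this
      omega
    rcases hβ with rfl | rfl
    · exact ⟨u, v, huv, fun x => alpha_DD e t L ht1 ht2 hL1 hL2 x⟩
    · refine ⟨v, u, huv.symm, fun x => ?_⟩
      rw [DD_swap, ← alpha_DD e t L ht1 ht2 hL1 hL2 x]
      simp only [Pi.neg_apply]
      ring
  · rintro ⟨u, v, huv, hβ⟩
    have hvals : u.val ≠ v.val := fun h => huv (ZMod.val_injective e h)
    have hult : u.val < e := ZMod.val_lt u
    have hvlt : v.val < e := ZMod.val_lt v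
    rcases Nat.lt_or_ge u.val v.val with h | h
    · refine ⟨u.val + 1, v.val - u.val, by omega, by omega, by omega, by omega, Or.inl ?_⟩
      funext x
      have had := alpha_DD e (u.val + 1) (v.val - u.val) (by omega) (by omega) (by omega)
        (by omega) x
      have e1 : u.val + 1 - 1 = u.val := by omega
      have e2 : u.val + 1 + (v.val - u.val) - 1 = v.val := by omega
      rw [e1, e2, cast_val_eq, cast_val_eq] at had
      exact mul_left_cancel₀ he' ((hβ x).trans had.symm)
    · have h' : v.val < u.val := by omega
      refine ⟨v.val + 1, u.val - v.val, by omega, by omega, by omega, by omega, Or.inr ?_⟩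
      funext x
      have had := alpha_DD e (v.val + 1) (u.val - v.val) (by omega) (by omega) (by omega)
        (by omega) x
      have e1 : v.val + 1 - 1 = v.val := by omega
      have e2 : v.val + 1 + (u.val - v.val) - 1 = u.val := by omega
      rw [e1, e2, cast_val_eq, cast_val_eq] at had
      have heq : (e : ℤ) * β x
          = (e:ℤ) * (-(alphaRoot e ((v.val + 1 : ℕ) : ℤ) (u.val - v.val) x)) := by
        rw [hβ x, ← neg_neg (DD e u v x), ← DD_swap, ← had]
        ring
      simp only [Pi.neg_apply]
      exact mul_left_cancel₀ he' heq

lemma gauss (n : ℕ) : (∑ a ∈ Finset.Icc 1 n, (n + 1 - a)) * 2 = n * (n + 1) := by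
  induction n with
  | zero => simp
  | succ n ih =>
    rw [Finset.sum_Icc_succ_top (by omega : 1 ≤ n + 1)]
    have hcongr : ∑ a ∈ Finset.Icc 1 n, (n + 1 + 1 - a)
        = ∑ a ∈ Finset.Icc 1 n, ((n + 1 - a) + 1) := by
      apply Finset.sum_congr rfl
      intro a ha
      rw [Finset.mem_Icc] at ha
      omega
    rw [hcongr, Finset.sum_add_distrib, Finset.sum_const, Nat.card_Icc]
    have : (n + 1 - 1) • 1 = n := by simp
    rw [this]
    have expand : (n+1) * (n+1+1) = n * (n+1) + 2 * (n+1) := by ring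
    omega

lemma pFin_sum (e : ℕ) (s : Finset ℕ) (f : ℕ → ZMod e → ℤ) :
    pFin e (∑ t ∈ s, f t) = ∑ t ∈ s, pFin e (f t) := by
  funext j
  simp only [pFin, Pi.sub_apply, Finset.sum_apply]
  rw [← Finset.sum_sub_distrib]

lemma gauss' (e : ℕ) (he : 1 ≤ e) :
    ∑ a ∈ Finset.Icc 1 (e-1), (e - 1 + 1 - a) = e * (e-1) / 2 := by
  have hg := gauss (e-1)
  have h : (e-1) * (e-1+1) = e * (e-1) := by
    rw [Nat.sub_add_cancel he, Nat.mul_comm]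
  rw [h] at hg
  exact (Nat.div_eq_of_eq_mul_left (by norm_num) hg.symm).symm

/-- `P₊^θ` is a positive system for `Φ^fin` with base `Δ^θ = {p(γ^θ_a)}`:
`Φ^fin = P₊^θ ⊔ (−P₊^θ)`, `P₊^θ` is closed, has cardinality `e(e−1)/2`, and each of
its elements is a `ℤ_{≥0}`-combination of the base elements. -/
theorem statement10 (e : ℕ) (he : 1 < e) (θ : ℕ → ℕ)
    (hθ : Set.BijOn θ (Set.Icc 1 e) (Set.Iio e)) :
    (PhiFin e = PposTheta e θ ∪ {β | -β ∈ PposTheta e θ}) ∧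
    (∀ β₁ ∈ PposTheta e θ, ∀ β₂ ∈ PposTheta e θ,
      β₁ + β₂ ∈ PhiFin e → β₁ + β₂ ∈ PposTheta e θ) ∧
    (∀ β ∈ PposTheta e θ, -β ∉ PposTheta e θ) ∧
    ((PposTheta e θ).ncard = e * (e - 1) / 2) ∧
    (∀ β ∈ PposTheta e θ, ∃ m : ℕ → ℕ,
      β = ∑ t ∈ Finset.Icc 1 (e - 1), (m t : ℤ) • pFin e (gammaTheta e θ t)) := by
  haveI : NeZero e := ⟨by omega⟩
  classical
  have he' : (e : ℤ) ≠ 0 := by exact_mod_cast (by omega : e ≠ 0)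
  have hmaps : ∀ t, 1 ≤ t → t ≤ e → θ t < e := fun t h1 h2 => hθ.mapsTo ⟨h1, h2⟩
  have hinj : ∀ i j, 1 ≤ i → i ≤ e → 1 ≤ j → j ≤ e → θ i = θ j → i = j :=
    fun i j h1 h2 h3 h4 h => hθ.injOn ⟨h1, h2⟩ ⟨h3, h4⟩ h
  have hcast_inj : ∀ i j, 1 ≤ i → i ≤ e → 1 ≤ j → j ≤ e →
      ((θ i : ℕ) : ZMod e) = ((θ j : ℕ) : ZMod e) → i = j := by
    intro i j h1 h2 h3 h4 h
    apply hinj i j h1 h2 h3 h4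
    have hh := congrArg ZMod.val h
    rwa [ZMod.val_natCast, ZMod.val_natCast, Nat.mod_eq_of_lt (hmaps i h1 h2),
      Nat.mod_eq_of_lt (hmaps j h3 h4)] at hh
  have hcast_ne : ∀ i j, 1 ≤ i → i ≤ e → 1 ≤ j → j ≤ e → i ≠ j →
      ((θ i : ℕ) : ZMod e) ≠ ((θ j : ℕ) : ZMod e) :=
    fun i j h1 h2 h3 h4 hne h => hne (hcast_inj i j h1 h2 h3 h4 h)
  -- the weight function
  set W : ZMod e → ℤ := fun x =>
    if h : ∃ i, i ∈ Set.Icc 1 e ∧ θ i = x.val then ((h.choose : ℕ) : ℤ) else 0 with hWdef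
  have hWθ : ∀ i, 1 ≤ i → i ≤ e → W ((θ i : ℕ) : ZMod e) = (i : ℤ) := by
    intro i h1 h2
    have hval : (((θ i : ℕ) : ZMod e)).val = θ i := by
      rw [ZMod.val_natCast]; exact Nat.mod_eq_of_lt (hmaps i h1 h2)
    have hex : ∃ k, k ∈ Set.Icc 1 e ∧ θ k = (((θ i : ℕ) : ZMod e)).val :=
      ⟨i, ⟨h1, h2⟩, hval.symm⟩
    simp only [hWdef]
    rw [dif_pos hex]
    obtain ⟨hmem, hspec⟩ := hex.choose_spec
    have : hex.choose = i := hinj _ i hmem.1 hmem.2 h1 h2 (by rw [hspec, hval])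
    rw [this]
  -- the linear functional
  set lam : (ZMod e → ℤ) → ℤ := fun β => ∑ x : ZMod e, W x * (β (x+1) - β x) with hlamdef
  have lam_spec : ∀ (β : ZMod e → ℤ) (u v : ZMod e),
      (∀ x, (e : ℤ) * β x = DD e u v x) → lam β = W u - W v := by
    intro β u v hβ
    have key : (e : ℤ) * lam β = (e : ℤ) * (W u - W v) := by
      simp only [hlamdef]
      rw [Finset.mul_sum]
      have step : ∀ x : ZMod e, (e : ℤ) * (W x * (β (x+1) - β x))
          = ((if x = u then W x else 0) - (if x = v then W x else 0)) * e := by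
        intro x
        have h1 : (e : ℤ) * (β (x+1) - β x) = DD e u v (x+1) - DD e u v x := by
          rw [mul_sub, hβ, hβ]
        have h2 := DD_deriv e u v x
        calc (e : ℤ) * (W x * (β (x+1) - β x))
            = W x * ((e : ℤ) * (β (x+1) - β x)) := by ring
          _ = W x * (DD e u v (x+1) - DD e u v x) := by rw [h1]
          _ = W x * ((e : ℤ) * ((if x = u then 1 else 0) - (if x = v then 1 else 0))) := by
              rw [h2]
          _ = _ := by split_ifs <;> ring
      rw [Finset.sum_congr rfl (fun x _ => step x), ← Finset.sum_mul,
        Finset.sum_sub_distrib, Finset.sum_ite_eq' Finset.univ u W,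
        Finset.sum_ite_eq' Finset.univ v W]
      simp only [Finset.mem_univ, if_true]
      ring
    exact mul_left_cancel₀ he' key
  have lam_add : ∀ β₁ β₂, lam (β₁ + β₂) = lam β₁ + lam β₂ := by
    intro β₁ β₂
    simp only [hlamdef, Pi.add_apply, ← Finset.sum_add_distrib]
    apply Finset.sum_congr rfl
    intro x _
    ring
  have lam_negf : ∀ β, lam (-β) = - lam β := by
    intro β
    simp only [hlamdef, Pi.neg_apply, ← Finset.sum_neg_distrib]
    apply Finset.sum_congr rfl
    intro x _
    ring
  have lam_lt : ∀ β ∈ PposTheta e θ, lam β < 0 := by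
    intro β hβ
    rw [Ppos_char e he θ hθ] at hβ
    obtain ⟨i, j, hi, hij, hj, hDD⟩ := hβ
    rw [lam_spec β _ _ hDD, hWθ i hi (by omega), hWθ j (by omega) hj]
    have : (i : ℤ) < j := by exact_mod_cast hij
    omega
  -- Part 1
  have part1 : PhiFin e = PposTheta e θ ∪ {β | -β ∈ PposTheta e θ} := by
    ext β
    rw [Set.mem_union, Phi_char e he]
    constructor
    · rintro ⟨u, v, huv, hDD⟩
      obtain ⟨i, hi, hθi⟩ := hθ.surjOn (show u.val ∈ Set.Iio e from ZMod.val_lt u)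
      obtain ⟨j, hj, hθj⟩ := hθ.surjOn (show v.val ∈ Set.Iio e from ZMod.val_lt v)
      have hij : i ≠ j := by
        intro h
        apply huv
        apply ZMod.val_injective e
        rw [← hθi, ← hθj, h]
      have hcu : ((θ i : ℕ) : ZMod e) = u := by rw [hθi, cast_val_eq]
      have hcv : ((θ j : ℕ) : ZMod e) = v := by rw [hθj, cast_val_eq]
      rcases Nat.lt_or_ge i j with hlt | hge
      · left
        rw [Ppos_char e he θ hθ]
        exact ⟨i, j, hi.1, hlt, hj.2, by rw [hcu, hcv]; exact hDD⟩
      · right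
        have hlt : j < i := by omega
        show -β ∈ PposTheta e θ
        rw [Ppos_char e he θ hθ]
        refine ⟨j, i, hj.1, hlt, hi.2, fun x => ?_⟩
        rw [hcv, hcu, DD_swap]
        simp only [Pi.neg_apply]
        linarith [hDD x]
    · rintro (hβ | hβ)
      · rw [Ppos_char e he θ hθ] at hβ
        obtain ⟨i, j, hi, hij, hj, hDD⟩ := hβ
        exact ⟨_, _, hcast_ne i j hi (by omega) (by omega) hj (by omega), hDD⟩
      · have hβ' : -β ∈ PposTheta e θ := hβ
        rw [Ppos_char e he θ hθ] at hβ'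
        obtain ⟨i, j, hi, hij, hj, hDD⟩ := hβ'
        refine ⟨_, _, (hcast_ne i j hi (by omega) (by omega) hj (by omega)).symm,
          fun x => ?_⟩
        rw [DD_swap]
        have := hDD x
        simp only [Pi.neg_apply] at this
        linarith
  -- Part 2
  have part2 : ∀ β₁ ∈ PposTheta e θ, ∀ β₂ ∈ PposTheta e θ,
      β₁ + β₂ ∈ PhiFin e → β₁ + β₂ ∈ PposTheta e θ := by
    intro β₁ h1 β₂ h2 hsum
    rw [part1, Set.mem_union] at hsum
    rcases hsum with h | h
    · exact h
    · exfalso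
      have h3 := lam_lt _ h
      rw [lam_negf, lam_add] at h3
      have h4 := lam_lt _ h1
      have h5 := lam_lt _ h2
      linarith
  -- Part 3
  have part3 : ∀ β ∈ PposTheta e θ, -β ∉ PposTheta e θ := by
    intro β h1 h2
    have h3 := lam_lt _ h1
    have h4 := lam_lt _ h2
    rw [lam_negf] at h4
    linarith
  -- Part 4
  have part4 : (PposTheta e θ).ncard = e * (e - 1) / 2 := by
    set T : Finset ((_ : ℕ) × ℕ) :=
      (Finset.Icc 1 (e-1)).sigma (fun a => Finset.Icc a (e-1)) with hT
    set F : ((_ : ℕ) × ℕ) → (ZMod e → ℤ) :=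
      fun p => pFin e (gammaInt e θ p.1 p.2) with hF
    have hset : PposTheta e θ = ↑(T.image F) := by
      ext β
      simp only [Finset.coe_image, Set.mem_image, Finset.mem_coe, Finset.mem_sigma,
        Finset.mem_Icc, hT, hF, PposTheta, Set.mem_setOf_eq]
      constructor
      · rintro ⟨a, b, ha, hab, hb, rfl⟩
        exact ⟨⟨a, b⟩, ⟨⟨ha, (by omega : a ≤ e - 1)⟩, hab, hb⟩, rfl⟩
      · rintro ⟨⟨a, b⟩, ⟨⟨ha1, ha2⟩, hab, hb⟩, rfl⟩
        exact ⟨a, b, ha1, hab, hb, rfl⟩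
    rw [hset, Set.ncard_coe_finset]
    have hinjF : Set.InjOn F ↑T := by
      rintro ⟨a, b⟩ hp ⟨c, d⟩ hq hpq
      simp only [hT, Finset.mem_coe, Finset.mem_sigma, Finset.mem_Icc] at hp hq
      simp only [hF] at hpq
      obtain ⟨⟨ha1, ha2⟩, hab, hb⟩ := hp
      obtain ⟨⟨hc1, hc2⟩, hcd, hd⟩ := hq
      have h1 : ∀ x, DD e ((θ a : ℕ) : ZMod e) ((θ (b+1) : ℕ) : ZMod e) x
          = DD e ((θ c : ℕ) : ZMod e) ((θ (d+1) : ℕ) : ZMod e) x := by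
        intro x
        rw [← pFin_DD e θ a b hab (fun t h1 h2 => hmaps t (by omega) (by omega)) x,
          ← pFin_DD e θ c d hcd (fun t h1 h2 => hmaps t (by omega) (by omega)) x, hpq]
      have hne : ((θ a : ℕ) : ZMod e) ≠ ((θ (b+1) : ℕ) : ZMod e) :=
        hcast_ne a (b+1) (by omega) (by omega) (by omega) (by omega) (by omega)
      obtain ⟨hu, hv⟩ := DD_inj e hne h1
      have hac : a = c := hcast_inj a c (by omega) (by omega) (by omega) (by omega) hu
      have hbd : b + 1 = d + 1 :=
        hcast_inj (b+1) (d+1) (by omega) (by omega) (by omega) (by omega) hv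
      have hbd' : b = d := by omega
      subst hac
      subst hbd'
      rfl
    rw [Finset.card_image_of_injOn hinjF, hT, Finset.card_sigma]
    have hc : ∀ a ∈ Finset.Icc 1 (e-1), (Finset.Icc a (e-1)).card = e - 1 + 1 - a := by
      intro a ha
      rw [Nat.card_Icc]
    rw [Finset.sum_congr rfl hc]
    exact gauss' e (by omega)
  -- Part 5
  have part5 : ∀ β ∈ PposTheta e θ, ∃ m : ℕ → ℕ,
      β = ∑ t ∈ Finset.Icc 1 (e - 1), (m t : ℤ) • pFin e (gammaTheta e θ t) := by
    rintro β ⟨a, b, ha, hab, hb, rfl⟩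
    refine ⟨fun t => if a ≤ t ∧ t ≤ b then 1 else 0, ?_⟩
    have hterm : ∀ t, (((if a ≤ t ∧ t ≤ b then (1:ℕ) else 0) : ℕ) : ℤ) •
          pFin e (gammaTheta e θ t)
        = if t ∈ Finset.Icc a b then pFin e (gammaTheta e θ t) else 0 := by
      intro t
      by_cases h : a ≤ t ∧ t ≤ b
      · rw [if_pos h, if_pos (Finset.mem_Icc.mpr h)]
        simp
      · rw [if_neg h, if_neg (fun hc => h (Finset.mem_Icc.mp hc))]
        simp
    rw [Finset.sum_congr rfl (fun t _ => hterm t), Finset.sum_ite_mem]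
    have hint : Finset.Icc 1 (e-1) ∩ Finset.Icc a b = Finset.Icc a b := by
      ext x
      simp only [Finset.mem_inter, Finset.mem_Icc]
      omega
    rw [hint, gammaInt, pFin_sum]
  exact ⟨part1, part2, part3, part4, part5⟩
end

section
/- Let θ be a permutation of [0,e−1], and set γ^θ_t := α(θ_t+1, (θ_{t+1}−θ_t) mod e) ∈ ℤI for t ∈ [1,e−1], where ℤI is the affine type A_{e-1}^{(1)} root lattice with null root δ. Then {δ, γ^θ_1, …, γ^θ_{e-1}} is a ℤ-basis of ℤI: every element of ℤI can be written uniquely as kδ + m_1 γ^θ_1 + ⋯ + m_{e-1} γ^θ_{e-1} with k, m_1,…,m_{e-1} ∈ ℤ. -/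
/-!
The discrete derivative `β ↦ (x ↦ β (x + 1) - β x)` kills `δ` and sends `γ^θ_t` to
`1_{θ_t} - 1_{θ_{t+1}}`. Given `β`, let `c_t` be the partial sums of the derivative of `β` along
`θ_1, θ_2, …`; then `β - ∑ c_t γ^θ_t` has derivative zero, hence is a multiple of `δ`, the
boundary term `c_e` vanishing because the derivative of `β` sums to zero over `ℤ/e`. So `δ` and
the `γ^θ_t` span `ℤI`, and `e` vectors spanning a free `ℤ`-module of rank `e` form a basis.
-/

lemma alphaRoot_eq_sum (e : ℕ) (t : ℤ) (L : ℕ) (j : ZMod e) :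
    alphaRoot e t L j = ∑ k ∈ Finset.range L, if ((t + k : ℤ) : ZMod e) = j then 1 else 0 := by
  simp [alphaRoot, Finset.sum_boole]

lemma alphaRoot_add_one_sub (e : ℕ) (t : ℤ) (L : ℕ) (j : ZMod e) :
    alphaRoot e t L (j + 1) - alphaRoot e t L j =
      (if j = ((t - 1 : ℤ) : ZMod e) then 1 else 0) -
        (if j = ((t + L - 1 : ℤ) : ZMod e) then 1 else 0) := by
  rw [alphaRoot_eq_sum, alphaRoot_eq_sum, ← Finset.sum_sub_distrib]
  convert Finset.sum_range_sub'
    (fun k : ℕ => if j = ((t + k - 1 : ℤ) : ZMod e) then (1 : ℤ) else 0) L using 3 with k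
  · push_cast
    simp only [eq_comm (a := j), sub_eq_iff_eq_add]
  · push_cast
    simp only [← add_assoc, add_sub_cancel_right, eq_comm (a := j)]
  · simp

lemma gammaTheta_add_one_sub {e : ℕ} {θ : ℕ → ℕ} {t : ℕ} (h : θ t ≤ θ (t + 1) + e)
    (x : ZMod e) :
    gammaTheta e θ t (x + 1) - gammaTheta e θ t x =
      (if x = θ t then 1 else 0) - (if x = θ (t + 1) then 1 else 0) := by
  have hend :
      (((θ t : ℤ) + 1 + ((θ (t + 1) + e - θ t) % e : ℕ) - 1 : ℤ) : ZMod e) = θ (t + 1) := by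
    push_cast [ZMod.natCast_mod, Nat.cast_sub h, ZMod.natCast_self]
    ring
  rw [gammaTheta, alphaRoot_add_one_sub, hend]
  simp

lemma ZMod.bijOn_natCast_Iio (e : ℕ) [NeZero e] :
    Set.BijOn (Nat.cast : ℕ → ZMod e) (Set.Iio e) Set.univ := by
  refine ⟨Set.mapsTo_univ _ _, fun a ha b hb hab => ?_,
    fun x _ => ⟨x.val, x.val_lt, x.natCast_zmod_val⟩⟩
  rw [← ZMod.val_cast_of_lt ha, hab, ZMod.val_cast_of_lt hb]

lemma eq_const_of_forall_add_one_eq {e : ℕ} [NeZero e] {M : Type*} {β : ZMod e → M}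
    (hβ : ∀ x, β (x + 1) = β x) (x : ZMod e) : β x = β 0 := by
  have hnat : ∀ n : ℕ, β n = β 0 := by
    intro n
    induction n with
    | zero => simp
    | succ n ih => rw [Nat.cast_succ, hβ, ih]
  rw [← x.natCast_zmod_val, hnat]

lemma sum_add_one_sub_eq_zero {e : ℕ} [NeZero e] {M : Type*} [AddCommGroup M] (β : ZMod e → M) :
    ∑ x, (β (x + 1) - β x) = 0 := by
  rw [Finset.sum_sub_distrib, sub_eq_zero]
  exact Fintype.sum_equiv (Equiv.addRight 1) _ _ (fun _ => rfl)

section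

variable {e : ℕ} [NeZero e] {θ : ℕ → ℕ} (hθ : Set.BijOn θ (Set.Icc 1 e) (Set.Iio e))
include hθ

lemma bijOn_natCast_comp :
    Set.BijOn (fun r => (θ r : ZMod e)) (Set.Icc 1 e) Set.univ :=
  (ZMod.bijOn_natCast_Iio e).comp hθ

lemma sum_Icc_comp_eq_sum {M : Type*} [AddCommMonoid M] (f : ZMod e → M) :
    ∑ r ∈ Finset.Icc 1 e, f (θ r) = ∑ x, f x := by
  have h := bijOn_natCast_comp hθ
  exact Finset.sum_nbij (fun r => (θ r : ZMod e)) (fun _ _ => Finset.mem_univ _)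
    (by simpa using h.injOn) (by simpa using h.surjOn) (fun _ _ => rfl)

lemma sum_smul_gammaTheta_add_one_sub (c : ℕ → ℤ) (hc0 : c 0 = 0) (hce : c e = 0)
    {r : ℕ} (hr : r ∈ Finset.Icc 1 e) :
    (∑ t ∈ Finset.Ico 1 e, c t • gammaTheta e θ t) (θ r + 1) -
      (∑ t ∈ Finset.Ico 1 e, c t • gammaTheta e θ t) (θ r) = c r - c (r - 1) := by
  have hinj := (bijOn_natCast_comp hθ).injOn
  have hdiff : ∀ t ∈ Finset.Ico 1 e, gammaTheta e θ t (θ r + 1) - gammaTheta e θ t (θ r) =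
      (if r = t then 1 else 0) - (if r = t + 1 then 1 else 0) := by
    intro t ht
    simp only [Finset.mem_Ico, Finset.mem_Icc] at ht hr
    have hlt : θ t < e := hθ.mapsTo (Set.mem_Icc.2 ⟨ht.1, ht.2.le⟩)
    rw [gammaTheta_add_one_sub (by omega)]
    congr 2 <;> apply propext
    · exact ⟨fun h => hinj hr ⟨ht.1, ht.2.le⟩ h, fun h => h ▸ rfl⟩
    · exact ⟨fun h => hinj hr ⟨by omega, ht.2⟩ h, fun h => h ▸ rfl⟩
  simp only [Finset.sum_apply, Pi.smul_apply, smul_eq_mul, ← Finset.sum_sub_distrib, ← mul_sub]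
  rw [Finset.sum_congr rfl fun t ht => congrArg _ (hdiff t ht)]
  obtain ⟨hr1, hre⟩ := Finset.mem_Icc.1 hr
  have hshift : ∀ t, r = t + 1 ↔ r - 1 = t := by omega
  simp only [mul_sub, mul_ite, mul_one, mul_zero, Finset.sum_sub_distrib, hshift, Finset.sum_ite_eq]
  have hlast : (if r ∈ Finset.Ico 1 e then c r else 0) = c r :=
    ite_eq_left_iff.2 fun h => by rw [show r = e by simp at h; omega, hce]
  have hfirst : (if r - 1 ∈ Finset.Ico 1 e then c (r - 1) else 0) = c (r - 1) :=
    ite_eq_left_iff.2 fun h => by rw [show r - 1 = 0 by simp at h; omega, hc0]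
  rw [hlast, hfirst]

lemma exists_eq_smul_deltaRoot_add_sum_gammaTheta (β : ZMod e → ℤ) :
    ∃ (k : ℤ) (c : ℕ → ℤ),
      β = k • deltaRoot e + ∑ t ∈ Finset.Ico 1 e, c t • gammaTheta e θ t := by
  set d : ℕ → ℤ := fun r => β (θ r + 1) - β (θ r)
  set c : ℕ → ℤ := fun t => ∑ r ∈ Finset.Icc 1 t, d r
  set S := ∑ t ∈ Finset.Ico 1 e, c t • gammaTheta e θ t
  have hce : c e = 0 :=
    (sum_Icc_comp_eq_sum hθ fun x => β (x + 1) - β x).trans (sum_add_one_sub_eq_zero β)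
  have hconst : ∀ x, (β - S) (x + 1) = (β - S) x := by
    intro x
    obtain ⟨r, hr, rfl⟩ := (bijOn_natCast_comp hθ).surjOn (Set.mem_univ x)
    have hr' : r ∈ Finset.Icc 1 e := Finset.mem_Icc.2 hr
    have hcr : c r = c (r - 1) + d r := by
      obtain ⟨hr1, -⟩ := Finset.mem_Icc.1 hr'
      obtain ⟨s, rfl⟩ := Nat.exists_eq_add_of_le' hr1
      exact Finset.sum_Icc_succ_top (by omega) d
    have hS := sum_smul_gammaTheta_add_one_sub hθ c (by simp [c]) hce hr'
    simp only [Pi.sub_apply]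
    linarith
  refine ⟨(β - S) 0, c, funext fun x => ?_⟩
  have hx := eq_const_of_forall_add_one_eq hconst x
  simp only [Pi.sub_apply] at hx
  change β x = (β 0 - S 0) * 1 + S x
  linarith

end

def deltaGammaCombination (e : ℕ) (θ : ℕ → ℕ) : ℤ × (Fin (e - 1) → ℤ) →ₗ[ℤ] ZMod e → ℤ :=
  (LinearMap.toSpanSingleton ℤ _ (deltaRoot e)).coprod
    (Fintype.linearCombination ℤ fun t : Fin (e - 1) => gammaTheta e θ (t + 1))

lemma deltaGammaCombination_apply (e : ℕ) (θ : ℕ → ℕ) (p : ℤ × (Fin (e - 1) → ℤ)) :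
    deltaGammaCombination e θ p =
      p.1 • deltaRoot e + ∑ t : Fin (e - 1), p.2 t • gammaTheta e θ (t + 1) :=
  rfl

lemma deltaGammaCombination_surjective {e : ℕ} [NeZero e] {θ : ℕ → ℕ}
    (hθ : Set.BijOn θ (Set.Icc 1 e) (Set.Iio e)) :
    Function.Surjective (deltaGammaCombination e θ) := by
  intro β
  obtain ⟨k, c, hβ⟩ := exists_eq_smul_deltaRoot_add_sum_gammaTheta hθ β
  refine ⟨(k, fun t => c (t + 1)), ?_⟩
  rw [deltaGammaCombination_apply, hβ, Finset.sum_Ico_eq_sum_range,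
    ← Fin.sum_univ_eq_sum_range (fun t => c (1 + t) • gammaTheta e θ (1 + t))]
  simp only [add_comm 1]

/-- `{δ, γ^θ_1, …, γ^θ_{e-1}}` is a `ℤ`-basis of the root lattice `ℤI`: every element
is uniquely `kδ + m_1 γ^θ_1 + ⋯ + m_{e-1} γ^θ_{e-1}`. -/
theorem statement11 (e : ℕ) (he : 1 < e) (θ : ℕ → ℕ)
    (hθ : Set.BijOn θ (Set.Icc 1 e) (Set.Iio e)) :
    ∀ β : ZMod e → ℤ, ∃! p : ℤ × (Fin (e - 1) → ℤ),
      β = p.1 • deltaRoot e + ∑ t : Fin (e - 1), p.2 t • gammaTheta e θ ((t : ℕ) + 1) := by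
  have : NeZero e := ⟨by omega⟩
  have hbij := OrzechProperty.bijective_of_surjective_of_finrank_le _
    (deltaGammaCombination_surjective hθ) (by simp; omega)
  intro β
  simpa only [deltaGammaCombination_apply, eq_comm] using hbij.existsUnique β
end

section
/- Let (V, ≥) be a totally ordered ℚ-vector space and h: ℤI → V a ℤ-linear map such that β ↦ h(β)/ht(β) is injective on the set Ψ of indivisible positive roots of affine type A_{e-1}^{(1)} (real roots together with δ). Then the relation β ≽ γ ⟺ h(β)/ht(β) ≥ h(γ)/ht(γ) defines a convex preorder on Φ₊: it is reflexive, transitive, total; β ≽ γ with β+γ ∈ Φ₊ implies β ≽ β+γ ≽ γ; and β ≽ γ ≽ β holds iff β = γ or both β,γ are imaginary. -/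
/-- The height of an element of the root lattice: the sum of its coefficients. -/
def height (e : ℕ) [NeZero e] (β : ZMod e → ℤ) : ℤ := ∑ i : ZMod e, β i

/-- The set `Ψ` of indivisible positive roots: real positive roots together with `δ`. -/
def PsiSet (e : ℕ) : Set (ZMod e → ℤ) :=
  {β ∈ PhiPos e | ¬ ImaginaryRoot e β} ∪ {deltaRoot e}

open Set

lemma mediant_mem_Icc {K V : Type*} [Field K] [LinearOrder K] [IsStrictOrderedRing K]
    [AddCommGroup V] [PartialOrder V] [IsOrderedAddMonoid V] [Module K V] [PosSMulMono K V]
    {b d : K} (hb : 0 < b) (hd : 0 < d) {x y : V} (hle : d⁻¹ • y ≤ b⁻¹ • x) :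
    (b + d)⁻¹ • (x + y) ∈ Icc (d⁻¹ • y) (b⁻¹ • x) := by
  have hbd : 0 < b + d := hb.trans (lt_add_of_pos_right b hd)
  refine segment_subset_Icc hle ⟨d / (b + d), b / (b + d), by positivity, by positivity,
    by rw [← add_div, add_comm, div_self hbd.ne'], ?_⟩
  rw [smul_smul, smul_smul, smul_add, add_comm]
  congr 2 <;> field_simp

lemma height_alphaRoot (e : ℕ) [NeZero e] (t : ℤ) (L : ℕ) :
    height e (alphaRoot e t L) = L := by
  unfold height alphaRoot
  rw [← Nat.cast_sum, ← Finset.card_eq_sum_card_fiberwise (fun _ _ => Finset.mem_univ _),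
    Finset.card_range]

lemma height_pos_of_mem_PhiPos {e : ℕ} [NeZero e] {β : ZMod e → ℤ} (hβ : β ∈ PhiPos e) :
    0 < height e β := by
  obtain ⟨t, L, hL, rfl⟩ := hβ
  rw [height_alphaRoot]
  exact_mod_cast hL

lemma height_add (e : ℕ) [NeZero e] (β γ : ZMod e → ℤ) :
    height e (β + γ) = height e β + height e γ :=
  Finset.sum_add_distrib

lemma height_nsmul (e : ℕ) [NeZero e] (m : ℕ) (β : ZMod e → ℤ) :
    height e (m • β) = m * height e β := by
  simp only [height, Pi.smul_apply, nsmul_eq_mul, Finset.mul_sum]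

lemma imaginaryRoot_deltaRoot (e : ℕ) : ImaginaryRoot e (deltaRoot e) :=
  ⟨1, one_pos, rfl⟩

lemma ImaginaryRoot.eq_nsmul_deltaRoot {e : ℕ} {β : ZMod e → ℤ} (hβ : ImaginaryRoot e β) :
    ∃ m : ℕ, m ≠ 0 ∧ β = m • deltaRoot e := by
  obtain ⟨m, hm, rfl⟩ := hβ
  exact ⟨m, hm.ne', funext fun _ => by simp [deltaRoot]⟩

section RootSlope

variable {e : ℕ} [NeZero e] {V : Type*} [AddCommGroup V] [Module ℚ V]

def rootSlope (h : (ZMod e → ℤ) →ₗ[ℤ] V) (β : ZMod e → ℤ) : V :=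
  (height e β : ℚ)⁻¹ • h β

lemma rootSlope_nsmul (h : (ZMod e → ℤ) →ₗ[ℤ] V) {m : ℕ} (hm : m ≠ 0) (β : ZMod e → ℤ) :
    rootSlope h (m • β) = rootSlope h β := by
  have hm' : (m : ℚ) ≠ 0 := Nat.cast_ne_zero.2 hm
  rw [rootSlope, rootSlope, height_nsmul, map_nsmul, ← Nat.cast_smul_eq_nsmul ℚ, smul_smul]
  push_cast
  rw [mul_inv_rev, inv_mul_cancel_right₀ hm']

lemma ImaginaryRoot.rootSlope_eq (h : (ZMod e → ℤ) →ₗ[ℤ] V) {β : ZMod e → ℤ}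
    (hβ : ImaginaryRoot e β) : rootSlope h β = rootSlope h (deltaRoot e) := by
  obtain ⟨m, hm, rfl⟩ := hβ.eq_nsmul_deltaRoot
  exact rootSlope_nsmul h hm _

lemma eq_or_imaginaryRoot_of_rootSlope_eq (h : (ZMod e → ℤ) →ₗ[ℤ] V)
    (hinj : InjOn (rootSlope h) (PsiSet e)) {β γ : ZMod e → ℤ} (hβ : β ∈ PhiPos e)
    (hγ : γ ∈ PhiPos e) (hβγ : rootSlope h β = rootSlope h γ) :
    β = γ ∨ ImaginaryRoot e β ∧ ImaginaryRoot e γ := by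
  have hδ : deltaRoot e ∈ PsiSet e := Or.inr rfl
  by_cases hiβ : ImaginaryRoot e β <;> by_cases hiγ : ImaginaryRoot e γ
  · exact Or.inr ⟨hiβ, hiγ⟩
  · have hδγ : deltaRoot e = γ := hinj hδ (Or.inl ⟨hγ, hiγ⟩) ((hiβ.rootSlope_eq h).symm.trans hβγ)
    exact absurd (hδγ ▸ imaginaryRoot_deltaRoot e) hiγ
  · have hβδ : β = deltaRoot e := hinj (Or.inl ⟨hβ, hiβ⟩) hδ (hβγ.trans (hiγ.rootSlope_eq h))
    exact absurd (hβδ ▸ imaginaryRoot_deltaRoot e) hiβ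
  · exact Or.inl (hinj (Or.inl ⟨hβ, hiβ⟩) (Or.inl ⟨hγ, hiγ⟩) hβγ)

variable [LinearOrder V] [IsOrderedAddMonoid V] [PosSMulMono ℚ V]

lemma rootSlope_add_mem_Icc (h : (ZMod e → ℤ) →ₗ[ℤ] V) {β γ : ZMod e → ℤ}
    (hβ : 0 < height e β) (hγ : 0 < height e γ) (hle : rootSlope h γ ≤ rootSlope h β) :
    rootSlope h (β + γ) ∈ Icc (rootSlope h γ) (rootSlope h β) := by
  have hb : (0 : ℚ) < height e β := by exact_mod_cast hβ
  have hd : (0 : ℚ) < height e γ := by exact_mod_cast hγ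
  simpa only [rootSlope, height_add, map_add, Int.cast_add] using mediant_mem_Icc hb hd hle

def slopePreorder (h : (ZMod e → ℤ) →ₗ[ℤ] V) (hinj : InjOn (rootSlope h) (PsiSet e)) :
    ConvexPreorderOn e where
  rel β γ := rootSlope h γ ≤ rootSlope h β
  refl _ _ := le_rfl
  trans _ _ _ _ _ _ hβγ hγν := hγν.trans hβγ
  total β γ _ _ := le_total (rootSlope h γ) (rootSlope h β)
  convex _ _ hβ hγ hle _ :=
    (rootSlope_add_mem_Icc h (height_pos_of_mem_PhiPos hβ) (height_pos_of_mem_PhiPos hγ) hle).symm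
  imag_equiv β γ hβ hγ := by
    refine ⟨fun ⟨hγβ, hβγ⟩ => eq_or_imaginaryRoot_of_rootSlope_eq h hinj hβ hγ (hβγ.antisymm hγβ), ?_⟩
    rintro (rfl | ⟨hiβ, hiγ⟩)
    · exact ⟨le_rfl, le_rfl⟩
    · rw [hiβ.rootSlope_eq h, hiγ.rootSlope_eq h]
      exact ⟨le_rfl, le_rfl⟩

end RootSlope

theorem statement12_general (e : ℕ) [NeZero e]
    (V : Type*) [AddCommGroup V] [LinearOrder V] [IsOrderedAddMonoid V] [Module ℚ V] [PosSMulStrictMono ℚ V]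
    (h : (ZMod e → ℤ) →ₗ[ℤ] V)
    (hinj : ∀ β ∈ PsiSet e, ∀ γ ∈ PsiSet e,
      (height e β : ℚ)⁻¹ • h β = (height e γ : ℚ)⁻¹ • h γ → β = γ) :
    ∃ P : ConvexPreorderOn e, ∀ β γ : ZMod e → ℤ,
      P.rel β γ ↔ (height e γ : ℚ)⁻¹ • h γ ≤ (height e β : ℚ)⁻¹ • h β :=
  ⟨slopePreorder h fun β hβ γ hγ => hinj β hβ γ hγ, fun _ _ => Iff.rfl⟩

/-- If `h : ℤI → V` is a `ℤ`-linear map to a totally ordered `ℚ`-vector space such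
that `β ↦ h(β)/ht(β)` is injective on `Ψ`, then
`β ≽ γ ⟺ h(β)/ht(β) ≥ h(γ)/ht(γ)` defines a convex preorder on `Φ₊`. -/
theorem statement12 (e : ℕ) [NeZero e] (he : 1 < e)
    (V : Type*) [AddCommGroup V] [LinearOrder V] [IsOrderedAddMonoid V] [Module ℚ V] [PosSMulStrictMono ℚ V]
    (h : (ZMod e → ℤ) →ₗ[ℤ] V)
    (hinj : ∀ β ∈ PsiSet e, ∀ γ ∈ PsiSet e,
      (height e β : ℚ)⁻¹ • h β = (height e γ : ℚ)⁻¹ • h γ → β = γ) :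
    ∃ P : ConvexPreorderOn e, ∀ β γ : ZMod e → ℤ,
      P.rel β γ ↔ (height e γ : ℚ)⁻¹ • h γ ≤ (height e β : ℚ)⁻¹ • h β :=
  statement12_general e V h hinj
end
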